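/- arXiv:1707.01297 — 15 statements merged into one kernel-verified Lean document; each statement's English description precedes it below -/
import Mathlib

section
/- Let S be a finite set, and for σ∈S let a_σ≥0 and u_σ∈ℝ; let |K|>0, δt>0, and let ρⁿ>0, ρⁿ⁺¹>0 and ρ_σ>0 (σ∈S) satisfy the discrete mass balance (|K|/δt)(ρⁿ⁺¹−ρⁿ) + Σ_{σ∈S} a_σ ρ_σ u_σ = 0. Let φ be twice continuously differentiable on (0,∞). Then there exists ρ^{1/2} ∈ [[ρⁿ,ρⁿ⁺¹]] such that (|K|/δt)(φ(ρⁿ⁺¹)−φ(ρⁿ)) + Σ_{σ∈S} a_σ φ(ρ_σ) u_σ + (ρⁿ⁺¹·φ'(ρⁿ⁺¹) − φ(ρⁿ⁺¹))·Σ_{σ∈S} a_σ u_σ + R = 0, where R = (1/2)(|K|/δt)·φ''(ρ^{1/2})·(ρⁿ⁺¹−ρⁿ)² + Σ_{σ∈S} a_σ·[φ(ρⁿ⁺¹) − φ(ρ_σ) + φ'(ρⁿ⁺¹)(ρ_σ−ρⁿ⁺¹)]·u_σ. -/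
/-!
Multiply the mass balance by `φ'(ρⁿ⁺¹)` and subtract it from the claimed identity: what is left
is `(|K|/δt)` times the second-order Taylor expansion of `φ(ρⁿ)` about `ρⁿ⁺¹` with Lagrange
remainder, and the face terms cancel pointwise in `σ`.
-/

open Set

theorem ContDiffOn.exists_mem_uIcc_taylor_two {f : ℝ → ℝ} {s : Set ℝ} (hs : IsOpen s)
    (hf : ContDiffOn ℝ 2 f s) {x₀ x : ℝ} (hsub : uIcc x₀ x ⊆ s) :
    ∃ c ∈ uIcc x₀ x,
      f x = f x₀ + deriv f x₀ * (x - x₀) + deriv (deriv f) c * (x - x₀) ^ 2 / 2 := by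
  rcases eq_or_ne x₀ x with rfl | hne
  · exact ⟨x₀, left_mem_uIcc, by simp⟩
  obtain ⟨c, hc, hrem⟩ :=
    taylor_mean_remainder_lagrange_iteratedDeriv (n := 1) hne (hf.mono hsub)
  have hx₀ : x₀ ∈ uIcc x₀ x := left_mem_uIcc
  have hderiv : derivWithin f (uIcc x₀ x) x₀ = deriv f x₀ :=
    ((hf.contDiffAt (hs.mem_nhds (hsub hx₀))).differentiableAt (by norm_num)).derivWithin
      (uniqueDiffOn_uIcc hne x₀ hx₀)
  have hpoly : taylorWithinEval f 1 (uIcc x₀ x) x₀ x = f x₀ + deriv f x₀ * (x - x₀) := by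
    simp only [taylorWithinEval_succ, taylor_within_zero_eval, CharP.cast_eq_zero, zero_add,
      Nat.factorial_zero, Nat.cast_one, mul_one, inv_one, pow_one, one_mul,
      iteratedDerivWithin_one, hderiv, smul_eq_mul, add_right_inj]
    ring
  refine ⟨c, Ioo_subset_Icc_self hc, ?_⟩
  rw [hpoly, iteratedDeriv_succ, iteratedDeriv_one] at hrem
  norm_num at hrem
  linarith

theorem discrete_renormalized_mass_balance_general
    {ι : Type*} (S : Finset ι) (a u ρσ : ι → ℝ)
    (K δt ρn ρn1 : ℝ) (hρn : 0 < ρn) (hρn1 : 0 < ρn1)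
    (hmass : K / δt * (ρn1 - ρn) + ∑ σ ∈ S, a σ * ρσ σ * u σ = 0)
    (φ : ℝ → ℝ) (hφ : ContDiffOn ℝ 2 φ (Set.Ioi 0)) :
    ∃ ρh ∈ Set.uIcc ρn ρn1,
      K / δt * (φ ρn1 - φ ρn) + ∑ σ ∈ S, a σ * φ (ρσ σ) * u σ
        + (ρn1 * deriv φ ρn1 - φ ρn1) * ∑ σ ∈ S, a σ * u σ
        + (1 / 2 * (K / δt) * deriv (deriv φ) ρh * (ρn1 - ρn) ^ 2
            + ∑ σ ∈ S, a σ * (φ ρn1 - φ (ρσ σ) + deriv φ ρn1 * (ρσ σ - ρn1)) * u σ) = 0 := by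
  obtain ⟨ρh, hρh, htaylor⟩ := hφ.exists_mem_uIcc_taylor_two (x₀ := ρn1) (x := ρn) isOpen_Ioi
    (ordConnected_Ioi.uIcc_subset hρn1 hρn)
  refine ⟨ρh, uIcc_comm ρn1 ρn ▸ hρh, ?_⟩
  have hfaces : (ρn1 * deriv φ ρn1 - φ ρn1) * ∑ σ ∈ S, a σ * u σ
      + ∑ σ ∈ S, a σ * (φ ρn1 - φ (ρσ σ) + deriv φ ρn1 * (ρσ σ - ρn1)) * u σ
      + ∑ σ ∈ S, a σ * φ (ρσ σ) * u σ
      = deriv φ ρn1 * ∑ σ ∈ S, a σ * ρσ σ * u σ := by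
    simp only [Finset.mul_sum, ← Finset.sum_add_distrib]
    exact Finset.sum_congr rfl fun σ _ => by ring
  linear_combination hfaces + deriv φ ρn1 * hmass - K / δt * htaylor

/-- Discrete renormalized mass balance (Lemma 2.1): given the discrete mass balance
on a cell, any `C²` renormalizing function `φ` satisfies an exact identity with a
remainder made of a time part (evaluated at some intermediate density) and a face part. -/
theorem discrete_renormalized_mass_balance
    {ι : Type*} (S : Finset ι) (a u ρσ : ι → ℝ)
    (ha : ∀ σ ∈ S, 0 ≤ a σ) (hρσ : ∀ σ ∈ S, 0 < ρσ σ)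
    (K δt ρn ρn1 : ℝ) (hK : 0 < K) (hδt : 0 < δt) (hρn : 0 < ρn) (hρn1 : 0 < ρn1)
    (hmass : K / δt * (ρn1 - ρn) + ∑ σ ∈ S, a σ * ρσ σ * u σ = 0)
    (φ : ℝ → ℝ) (hφ : ContDiffOn ℝ 2 φ (Set.Ioi 0)) :
    ∃ ρh ∈ Set.uIcc ρn ρn1,
      K / δt * (φ ρn1 - φ ρn) + ∑ σ ∈ S, a σ * φ (ρσ σ) * u σ
        + (ρn1 * deriv φ ρn1 - φ ρn1) * ∑ σ ∈ S, a σ * u σ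
        + (1 / 2 * (K / δt) * deriv (deriv φ) ρh * (ρn1 - ρn) ^ 2
            + ∑ σ ∈ S, a σ * (φ ρn1 - φ (ρσ σ) + deriv φ ρn1 * (ρσ σ - ρn1)) * u σ) = 0 :=
  discrete_renormalized_mass_balance_general S a u ρσ K δt ρn ρn1 hρn hρn1 hmass φ hφ
end

section
/- Let S be a finite set, and for σ∈S let a_σ≥0, u_σ∈ℝ and ρ_σ>0; let |K|>0, δt>0, and let ρⁿ>0, ρⁿ⁺¹>0 satisfy the discrete mass balance (|K|/δt)(ρⁿ⁺¹−ρⁿ) + Σ_{σ∈S} F_σ = 0, where F_σ = a_σ ρ_σ u_σ. Let eⁿ>0, eⁿ⁺¹>0 and e_σ>0 (σ∈S), and let φ be twice continuously differentiable on (0,∞). Then there exists e^{1/2} ∈ [[eⁿ,eⁿ⁺¹]] such that φ'(eⁿ⁺¹)·[(|K|/δt)(ρⁿ⁺¹eⁿ⁺¹−ρⁿeⁿ) + Σ_{σ∈S} F_σ e_σ] = (|K|/δt)(ρⁿ⁺¹φ(eⁿ⁺¹)−ρⁿφ(eⁿ)) + Σ_{σ∈S} F_σ φ(e_σ) + R_e,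 where R_e = (1/2)(|K|/δt)·ρⁿ·φ''(e^{1/2})·(eⁿ⁺¹−eⁿ)² + Σ_{σ∈S} F_σ·[φ(eⁿ⁺¹) − φ(e_σ) + φ'(eⁿ⁺¹)(e_σ−eⁿ⁺¹)]. -/
/-!
Expand `φ` to second order around `eⁿ⁺¹` with Lagrange remainder to rewrite `ρⁿ φ(eⁿ)`. After
multiplying by `|K|/δt`, the terms in `ρⁿ⁺¹ - ρⁿ` are traded for `-∑ F_σ` by the mass balance,
and what is left of the fluxes is exactly the second part of `R_e`, a linear identity in the `F_σ`.
-/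

open Set

theorem exists_taylor_two_lagrange {φ : ℝ → ℝ} {U : Set ℝ} (hU : IsOpen U)
    (hφ : ContDiffOn ℝ 2 φ U) {x₀ x : ℝ} (hsub : uIcc x₀ x ⊆ U) :
    ∃ c ∈ uIcc x₀ x,
      φ x = φ x₀ + deriv φ x₀ * (x - x₀) + deriv (deriv φ) c * (x - x₀) ^ 2 / 2 := by
  rcases eq_or_ne x₀ x with rfl | hx
  · exact ⟨x₀, left_mem_uIcc, by ring⟩
  obtain ⟨c, hc, h⟩ := taylor_mean_remainder_lagrange_iteratedDeriv (n := 1) hx (hφ.mono hsub)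
  have hderiv : derivWithin φ (uIcc x₀ x) x₀ = deriv φ x₀ :=
    ((hφ.differentiableOn two_ne_zero).differentiableAt
      (hU.mem_nhds (hsub left_mem_uIcc))).derivWithin (uniqueDiffOn_uIcc hx _ left_mem_uIcc)
  refine ⟨c, uIoo_subset_uIcc_self hc, ?_⟩
  norm_num [taylorWithinEval_succ, iteratedDerivWithin_one, hderiv, iteratedDeriv_succ] at h
  linear_combination h

theorem Finset.sum_mul_tangent_gap_eq {ι : Type*} (S : Finset ι) (F e g : ι → ℝ) (p d x : ℝ) :
    ∑ σ ∈ S, F σ * (p - g σ + d * (e σ - x))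
      = (p - d * x) * ∑ σ ∈ S, F σ + d * ∑ σ ∈ S, F σ * e σ - ∑ σ ∈ S, F σ * g σ := by
  rw [Finset.mul_sum, Finset.mul_sum, ← Finset.sum_add_distrib, ← Finset.sum_sub_distrib]
  exact Finset.sum_congr rfl fun σ _ => by ring

theorem discrete_renormalized_energy_balance_general
    {ι : Type*} (S : Finset ι) (eσ : ι → ℝ)
    (K δt ρn ρn1 en en1 : ℝ)
    (hen : 0 < en) (hen1 : 0 < en1)
    (F : ι → ℝ)
    (hmass : K / δt * (ρn1 - ρn) + ∑ σ ∈ S, F σ = 0)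
    (φ : ℝ → ℝ) (hφ : ContDiffOn ℝ 2 φ (Set.Ioi 0)) :
    ∃ eh ∈ Set.uIcc en en1,
      deriv φ en1 * (K / δt * (ρn1 * en1 - ρn * en) + ∑ σ ∈ S, F σ * eσ σ)
        = K / δt * (ρn1 * φ en1 - ρn * φ en) + ∑ σ ∈ S, F σ * φ (eσ σ)
          + (1 / 2 * (K / δt) * ρn * deriv (deriv φ) eh * (en1 - en) ^ 2
              + ∑ σ ∈ S, F σ * (φ en1 - φ (eσ σ) + deriv φ en1 * (eσ σ - en1))) := by
  obtain ⟨eh, heh, htaylor⟩ := exists_taylor_two_lagrange isOpen_Ioi hφ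
    (ordConnected_Ioi.uIcc_subset hen1 hen)
  refine ⟨eh, uIcc_comm en1 en ▸ heh, ?_⟩
  rw [Finset.sum_mul_tangent_gap_eq]
  linear_combination (K / δt * ρn) * htaylor + (deriv φ en1 * en1 - φ en1) * hmass

/-- Discrete renormalized internal energy balance (Lemma 2.2): multiplying the
convection part of the discrete internal energy balance by `φ'(eⁿ⁺¹)` yields the
renormalized convection operator plus an explicit remainder, for some intermediate
energy `e^{1/2} ∈ [[eⁿ, eⁿ⁺¹]]`. -/
theorem discrete_renormalized_energy_balance
    {ι : Type*} (S : Finset ι) (a u ρσ eσ : ι → ℝ)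
    (ha : ∀ σ ∈ S, 0 ≤ a σ) (hρσ : ∀ σ ∈ S, 0 < ρσ σ) (heσ : ∀ σ ∈ S, 0 < eσ σ)
    (K δt ρn ρn1 en en1 : ℝ) (hK : 0 < K) (hδt : 0 < δt)
    (hρn : 0 < ρn) (hρn1 : 0 < ρn1) (hen : 0 < en) (hen1 : 0 < en1)
    (F : ι → ℝ) (hF : ∀ σ ∈ S, F σ = a σ * ρσ σ * u σ)
    (hmass : K / δt * (ρn1 - ρn) + ∑ σ ∈ S, F σ = 0)
    (φ : ℝ → ℝ) (hφ : ContDiffOn ℝ 2 φ (Set.Ioi 0)) :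
    ∃ eh ∈ Set.uIcc en en1,
      deriv φ en1 * (K / δt * (ρn1 * en1 - ρn * en) + ∑ σ ∈ S, F σ * eσ σ)
        = K / δt * (ρn1 * φ en1 - ρn * φ en) + ∑ σ ∈ S, F σ * φ (eσ σ)
          + (1 / 2 * (K / δt) * ρn * deriv (deriv φ) eh * (en1 - en) ^ 2
              + ∑ σ ∈ S, F σ * (φ en1 - φ (eσ σ) + deriv φ en1 * (eσ σ - en1))) :=
  discrete_renormalized_energy_balance_general S eσ K δt ρn ρn1 en en1 hen hen1 F hmass φ hφ
end

section
/- Let S be a finite set, and for σ∈S let a_σ≥0, u_σ∈ℝ and a neighbour density ρ_{L,σ}>0; let |K|>0, δt>0, ρⁿ>0, ρⁿ⁺¹>0, and define the upwind face densities by ρ_σ = ρⁿ⁺¹ if u_σ ≥ 0 and ρ_σ = ρ_{L,σ} if u_σ < 0. Assume the discrete mass balance (|K|/δt)(ρⁿ⁺¹−ρⁿ) + Σ_{σ∈S} a_σ ρ_σ u_σ = 0 holds, and let φ be a convex, twice continuously differentiable function on (0,∞). Then (|K|/δt)(φ(ρⁿ⁺¹)−φ(ρⁿ)) + Σ_{σ∈S}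 a_σ φ(ρ_σ) u_σ + (ρⁿ⁺¹ φ'(ρⁿ⁺¹) − φ(ρⁿ⁺¹))·Σ_{σ∈S} a_σ u_σ ≤ 0. -/
/-- Tangent line inequality for a convex function on `Ioi 0`. -/
lemma tangent_le {φ : ℝ → ℝ} (hconv : ConvexOn ℝ (Set.Ioi 0) φ)
    {x y : ℝ} (hx : 0 < x) (hy : 0 < y) (hd : DifferentiableAt ℝ φ x) :
    φ x + deriv φ x * (y - x) ≤ φ y := by
  rcases lt_trichotomy x y with h | h | h
  · have h1 := hconv.deriv_le_slope hx hy h hd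
    rw [slope_def_field, le_div_iff₀ (by linarith : (0:ℝ) < y - x)] at h1
    linarith
  · simp [h]
  · have h1 := hconv.slope_le_deriv hy hx h hd
    rw [slope_def_field, div_le_iff₀ (by linarith : (0:ℝ) < x - y)] at h1
    nlinarith

/-- Renormalized entropy inequality for the implicit first-order upwind discretization
of the mass balance, for any convex twice continuously differentiable function. -/
theorem implicit_upwind_mass_renormalization
    {ι : Type*} (S : Finset ι) (a u ρL : ι → ℝ)
    (ha : ∀ σ ∈ S, 0 ≤ a σ) (hρL : ∀ σ ∈ S, 0 < ρL σ)
    (K δt ρn ρn1 : ℝ) (hK : 0 < K) (hδt : 0 < δt) (hρn : 0 < ρn) (hρn1 : 0 < ρn1)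
    (ρσ : ι → ℝ) (hρσ : ∀ σ ∈ S, ρσ σ = if 0 ≤ u σ then ρn1 else ρL σ)
    (hmass : K / δt * (ρn1 - ρn) + ∑ σ ∈ S, a σ * ρσ σ * u σ = 0)
    (φ : ℝ → ℝ) (hφ : ContDiffOn ℝ 2 φ (Set.Ioi 0))
    (hconv : ConvexOn ℝ (Set.Ioi 0) φ) :
    K / δt * (φ ρn1 - φ ρn) + ∑ σ ∈ S, a σ * φ (ρσ σ) * u σ
      + (ρn1 * deriv φ ρn1 - φ ρn1) * ∑ σ ∈ S, a σ * u σ ≤ 0 := by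
  set c := deriv φ ρn1 with hc
  have hd : DifferentiableAt ℝ φ ρn1 :=
    (hφ.contDiffAt ((isOpen_Ioi).mem_nhds hρn1)).differentiableAt (by norm_num)
  have h0 : φ ρn1 + c * (ρn - ρn1) ≤ φ ρn := tangent_le hconv hρn1 hρn hd
  have hKδt : 0 ≤ K / δt := le_of_lt (div_pos hK hδt)
  -- step 1: bound the time term using convexity and the mass balance
  have h1 : K / δt * (φ ρn1 - φ ρn) ≤ -(c * ∑ σ ∈ S, a σ * ρσ σ * u σ) := by
    have hA : K / δt * (φ ρn1 - φ ρn) ≤ K / δt * (c * (ρn1 - ρn)) := by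
      apply mul_le_mul_of_nonneg_left _ hKδt
      linarith
    have h2 : K / δt * (ρn1 - ρn) = -∑ σ ∈ S, a σ * ρσ σ * u σ := by linarith
    calc K / δt * (φ ρn1 - φ ρn) ≤ K / δt * (c * (ρn1 - ρn)) := hA
      _ = c * (K / δt * (ρn1 - ρn)) := by ring
      _ = -(c * ∑ σ ∈ S, a σ * ρσ σ * u σ) := by rw [h2]; ring
  -- step 2: per-face convexity
  have h3 : ∑ σ ∈ S, (a σ * φ (ρσ σ) * u σ - c * (a σ * ρσ σ * u σ)
      + (ρn1 * c - φ ρn1) * (a σ * u σ)) ≤ 0 := by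
    apply Finset.sum_nonpos
    intro σ hσ
    have hrw := hρσ σ hσ
    have haσ := ha σ hσ
    by_cases hu : 0 ≤ u σ
    · rw [hrw, if_pos hu]; nlinarith [sq_nonneg (u σ)]
    · push_neg at hu
      rw [hrw, if_neg (not_le.mpr hu)]
      have hg : 0 ≤ φ (ρL σ) - φ ρn1 - c * (ρL σ - ρn1) := by
        have := tangent_le hconv hρn1 (hρL σ hσ) hd
        linarith
      have hau : a σ * u σ ≤ 0 := mul_nonpos_of_nonneg_of_nonpos haσ hu.le
      nlinarith [mul_nonpos_of_nonpos_of_nonneg hau hg]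
  calc K / δt * (φ ρn1 - φ ρn) + ∑ σ ∈ S, a σ * φ (ρσ σ) * u σ
        + (ρn1 * c - φ ρn1) * ∑ σ ∈ S, a σ * u σ
      ≤ -(c * ∑ σ ∈ S, a σ * ρσ σ * u σ) + ∑ σ ∈ S, a σ * φ (ρσ σ) * u σ
        + (ρn1 * c - φ ρn1) * ∑ σ ∈ S, a σ * u σ := by linarith
    _ = ∑ σ ∈ S, (a σ * φ (ρσ σ) * u σ - c * (a σ * ρσ σ * u σ)
        + (ρn1 * c - φ ρn1) * (a σ * u σ)) := by
        rw [Finset.sum_add_distrib, Finset.sum_sub_distrib, ← Finset.mul_sum, ← Finset.mul_sum]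
        ring
    _ ≤ 0 := h3
end

section
/- Let γ>1. Let S be a finite set, and for σ∈S let a_σ≥0, u_σ∈ℝ, a face density ρ_σ>0 and a neighbour internal energy e_{L,σ}>0; let |K|>0, δt>0, ρⁿ>0, ρⁿ⁺¹>0, eⁿ>0, eⁿ⁺¹>0, and define the upwind face energies by e_σ = eⁿ⁺¹ if u_σ ≥ 0 and e_σ = e_{L,σ} if u_σ < 0; set F_σ = a_σ ρ_σ u_σ and pⁿ⁺¹ = (γ−1)·ρⁿ⁺¹·eⁿ⁺¹. Assume the discrete mass balance (|K|/δt)(ρⁿ⁺¹−ρⁿ) + Σ_{σ∈S} F_σ = 0 and the discrete internal energy inequality (|K|/δt)(ρⁿ⁺¹eⁿ⁺¹−ρⁿeⁿ) + Σ_{σ∈S} F_σ e_σ + pⁿ⁺¹·Σ_{σ∈S} a_σ u_σ ≥ 0. Then (|K|/δt)(ρⁿ⁺¹ φ_e(eⁿ⁺¹) − ρⁿ φ_e(eⁿ)) + Σ_{σ∈S} F_σ φ_e(e_σ) + φ_e'(eⁿ⁺¹)·pⁿ⁺¹·Σ_{σ∈S} a_σ u_σ ≤ 0. -/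
/-- `φ_e(z) = -log z / (γ-1)`. -/
noncomputable def phiE (γ z : ℝ) : ℝ := -Real.log z / (γ - 1)

/-- `φ_e'(z) = -1/((γ-1) z)`. -/
noncomputable def phiE' (γ z : ℝ) : ℝ := -1 / ((γ - 1) * z)

/-- Convexity inequality: `φ_e(y) + φ_e'(y)(x - y) ≤ φ_e(x)`. -/
lemma phiE_convex_aux (γ x y : ℝ) (hγ : 1 < γ) (hx : 0 < x) (hy : 0 < y) :
    phiE γ y + phiE' γ y * (x - y) ≤ phiE γ x := by
  have hγ1 : (0 : ℝ) < γ - 1 := by linarith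
  have h1 : Real.log x - Real.log y ≤ x / y - 1 := by
    have := Real.log_le_sub_one_of_pos (div_pos hx hy)
    rwa [Real.log_div hx.ne' hy.ne'] at this
  have h2 : y * (Real.log x - Real.log y) ≤ x - y := by
    have := mul_le_mul_of_nonneg_left h1 hy.le
    calc y * (Real.log x - Real.log y) ≤ y * (x / y - 1) := this
      _ = x - y := by field_simp
  have hden : (0 : ℝ) < (γ - 1) * y := by positivity
  calc phiE γ y + phiE' γ y * (x - y)
      = (-Real.log y * y - (x - y)) / ((γ - 1) * y) := by
        unfold phiE phiE'; field_simp; ring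
    _ ≤ (-Real.log x * y) / ((γ - 1) * y) := by
        rw [div_le_div_iff_of_pos_right hden]; nlinarith [h2]
    _ = phiE γ x := by unfold phiE; field_simp


/-- Renormalized inequality derived from the discrete internal energy inequality
of the implicit upwind scheme, with the entropy function `φ_e`. -/
theorem implicit_upwind_energy_entropy
    (γ : ℝ) (hγ : 1 < γ)
    {ι : Type*} (S : Finset ι) (a u ρσ eL : ι → ℝ)
    (ha : ∀ σ ∈ S, 0 ≤ a σ) (hρσ : ∀ σ ∈ S, 0 < ρσ σ) (heL : ∀ σ ∈ S, 0 < eL σ)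
    (K δt ρn ρn1 en en1 : ℝ) (hK : 0 < K) (hδt : 0 < δt)
    (hρn : 0 < ρn) (hρn1 : 0 < ρn1) (hen : 0 < en) (hen1 : 0 < en1)
    (eσ F : ι → ℝ)
    (heσ : ∀ σ ∈ S, eσ σ = if 0 ≤ u σ then en1 else eL σ)
    (hF : ∀ σ ∈ S, F σ = a σ * ρσ σ * u σ)
    (p : ℝ) (hp : p = (γ - 1) * ρn1 * en1)
    (hmass : K / δt * (ρn1 - ρn) + ∑ σ ∈ S, F σ = 0)
    (henergy : 0 ≤ K / δt * (ρn1 * en1 - ρn * en) + ∑ σ ∈ S, F σ * eσ σ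
        + p * ∑ σ ∈ S, a σ * u σ) :
    K / δt * (ρn1 * phiE γ en1 - ρn * phiE γ en) + ∑ σ ∈ S, F σ * phiE γ (eσ σ)
      + phiE' γ en1 * p * ∑ σ ∈ S, a σ * u σ ≤ 0 := by
  have hγ1 : (0 : ℝ) < γ - 1 := by linarith
  set d : ℝ := phiE' γ en1 with hd
  set φ1 : ℝ := phiE γ en1 with hφ1
  have hd_neg : d < 0 := by
    rw [hd]; unfold phiE'
    apply div_neg_of_neg_of_pos (by norm_num) (by positivity)
  -- face-wise convexity bound
  have hsum : ∑ σ ∈ S, F σ * phiE γ (eσ σ) ≤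
      ∑ σ ∈ S, (φ1 * F σ + d * (F σ * eσ σ) - d * en1 * F σ) := by
    apply Finset.sum_le_sum
    intro σ hσ
    rcases le_or_gt 0 (u σ) with hu | hu
    · rw [heσ σ hσ, if_pos hu]; apply le_of_eq; ring
    · have hFσ : F σ ≤ 0 := by
        rw [hF σ hσ]
        exact mul_nonpos_of_nonneg_of_nonpos
          (mul_nonneg (ha σ hσ) (hρσ σ hσ).le) hu.le
      rw [heσ σ hσ, if_neg (not_le.mpr hu)]
      have hconv := phiE_convex_aux γ (eL σ) en1 hγ (heL σ hσ) hen1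
      calc F σ * phiE γ (eL σ) ≤ F σ * (φ1 + d * (eL σ - en1)) :=
            mul_le_mul_of_nonpos_left hconv hFσ
        _ = φ1 * F σ + d * (F σ * eL σ) - d * en1 * F σ := by ring
  have hsum' : ∑ σ ∈ S, (φ1 * F σ + d * (F σ * eσ σ) - d * en1 * F σ)
      = φ1 * (∑ σ ∈ S, F σ) + d * (∑ σ ∈ S, F σ * eσ σ)
        - d * en1 * (∑ σ ∈ S, F σ) := by
    rw [Finset.sum_sub_distrib, Finset.sum_add_distrib, ← Finset.mul_sum,
      ← Finset.mul_sum, ← Finset.mul_sum]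
  -- convexity bound for the previous time step
  have h0 : ρn * (φ1 + d * (en - en1)) ≤ ρn * phiE γ en :=
    mul_le_mul_of_nonneg_left (phiE_convex_aux γ en en1 hγ hen hen1) hρn.le
  have h0' : K / δt * (ρn1 * φ1 - ρn * phiE γ en)
      ≤ K / δt * (ρn1 * φ1 - ρn * (φ1 + d * (en - en1))) := by
    apply mul_le_mul_of_nonneg_left (by linarith) (by positivity)
  -- abbreviations
  set Sf : ℝ := ∑ σ ∈ S, F σ
  set Sfe : ℝ := ∑ σ ∈ S, F σ * eσ σ
  set Sau : ℝ := ∑ σ ∈ S, a σ * u σ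
  set E : ℝ := K / δt * (ρn1 * en1 - ρn * en) + Sfe + p * Sau with hE
  -- the upper bound equals d * E, which is nonpositive
  have hAeq : K / δt * (ρn1 * φ1 - ρn * (φ1 + d * (en - en1)))
      + (φ1 * Sf + d * Sfe - d * en1 * Sf) + d * p * Sau = d * E := by
    rw [hE]
    linear_combination (φ1 - d * en1) * hmass
  have hdE : d * E ≤ 0 := mul_nonpos_of_nonpos_of_nonneg hd_neg.le henergy
  calc K / δt * (ρn1 * φ1 - ρn * phiE γ en) + ∑ σ ∈ S, F σ * phiE γ (eσ σ)
        + d * p * Sau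
      ≤ K / δt * (ρn1 * φ1 - ρn * (φ1 + d * (en - en1)))
        + (φ1 * Sf + d * Sfe - d * en1 * Sf) + d * p * Sau := by
        rw [← hsum']; linarith [hsum, h0']
    _ = d * E := hAeq
    _ ≤ 0 := hdE
end

section
/- Let γ>1. Let S be a finite set, and for σ∈S let a_σ≥0, u_σ∈ℝ and neighbour values ρ_{L,σ}>0, e_{L,σ}>0; let |K|>0, δt>0, ρⁿ>0, ρⁿ⁺¹>0, eⁿ>0, eⁿ⁺¹>0. Define the upwind face values ρ_σ = ρⁿ⁺¹ and e_σ = eⁿ⁺¹ if u_σ ≥ 0, and ρ_σ = ρ_{L,σ}, e_σ = e_{L,σ} if u_σ < 0; set F_σ = a_σ ρ_σ u_σ and pⁿ⁺¹ = (γ−1)·ρⁿ⁺¹·eⁿ⁺¹. Assume the discrete mass balance (|K|/δt)(ρⁿ⁺¹−ρⁿ) + Σ_{σ∈S} F_σ = 0 and the discrete internal energy inequality (|K|/δt)(ρⁿ⁺¹eⁿ⁺¹−ρⁿeⁿ) + Σ_{σ∈S} F_σ e_σ + pⁿ⁺¹·Σ_{σ∈S} a_σ u_σ ≥ 0. Then,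 with ηⁿ = φ_ρ(ρⁿ) + ρⁿ·φ_e(eⁿ), ηⁿ⁺¹ = φ_ρ(ρⁿ⁺¹) + ρⁿ⁺¹·φ_e(eⁿ⁺¹) and η_σ = φ_ρ(ρ_σ) + ρ_σ·φ_e(e_σ), the local entropy inequality (|K|/δt)(ηⁿ⁺¹ − ηⁿ) + Σ_{σ∈S} a_σ η_σ u_σ ≤ 0 holds. -/
/-- `φ_ρ(z) = z log z`. -/
noncomputable def phiRho (z : ℝ) : ℝ := z * Real.log z

/-- Convexity-type inequality for the logarithm: `y - x ≤ y (log y - log x)`. -/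
lemma key_log (x y : ℝ) (hx : 0 < x) (hy : 0 < y) :
    y - x ≤ y * (Real.log y - Real.log x) := by
  have h := Real.log_le_sub_one_of_pos (show (0:ℝ) < x / y from div_pos hx hy)
  have h2 := mul_le_mul_of_nonneg_left h hy.le
  rw [Real.log_div hx.ne' hy.ne'] at h2
  have : y * (x / y - 1) = x - y := by field_simp
  nlinarith

/-- Local discrete entropy inequality for the implicit upwind scheme (Theorem 2.5):
any solution of the scheme satisfies
`(|K|/δt)(ηⁿ⁺¹ − ηⁿ) + Σ_σ a_σ η_σ u_σ ≤ 0` with `η = φ_ρ(ρ) + ρ φ_e(e)`. -/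
theorem implicit_upwind_entropy
    (γ : ℝ) (hγ : 1 < γ)
    {ι : Type*} (S : Finset ι) (a u ρL eL : ι → ℝ)
    (ha : ∀ σ ∈ S, 0 ≤ a σ) (hρL : ∀ σ ∈ S, 0 < ρL σ) (heL : ∀ σ ∈ S, 0 < eL σ)
    (K δt ρn ρn1 en en1 : ℝ) (hK : 0 < K) (hδt : 0 < δt)
    (hρn : 0 < ρn) (hρn1 : 0 < ρn1) (hen : 0 < en) (hen1 : 0 < en1)
    (ρσ eσ F : ι → ℝ)
    (hρσ : ∀ σ ∈ S, ρσ σ = if 0 ≤ u σ then ρn1 else ρL σ)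
    (heσ : ∀ σ ∈ S, eσ σ = if 0 ≤ u σ then en1 else eL σ)
    (hF : ∀ σ ∈ S, F σ = a σ * ρσ σ * u σ)
    (p : ℝ) (hp : p = (γ - 1) * ρn1 * en1)
    (hmass : K / δt * (ρn1 - ρn) + ∑ σ ∈ S, F σ = 0)
    (henergy : 0 ≤ K / δt * (ρn1 * en1 - ρn * en) + ∑ σ ∈ S, F σ * eσ σ
        + p * ∑ σ ∈ S, a σ * u σ) :
    K / δt * ((phiRho ρn1 + ρn1 * phiE γ en1) - (phiRho ρn + ρn * phiE γ en))
      + ∑ σ ∈ S, a σ * (phiRho (ρσ σ) + ρσ σ * phiE γ (eσ σ)) * u σ ≤ 0 := by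
  have hγ1 : (0:ℝ) < γ - 1 := by linarith
  obtain ⟨d, hd_def⟩ : ∃ d : ℝ, d = -(((γ - 1) * en1)⁻¹) := ⟨_, rfl⟩
  have hd_neg : d ≤ 0 := by
    have h : (0:ℝ) < ((γ - 1) * en1)⁻¹ := by positivity
    rw [hd_def]; linarith
  obtain ⟨c1, hc1_def⟩ : ∃ c1 : ℝ,
      c1 = Real.log ρn1 + 1 + phiE γ en1 - en1 * d := ⟨_, rfl⟩
  -- pointwise bound for the flux sum
  have hpt : ∀ σ ∈ S, a σ * (phiRho (ρσ σ) + ρσ σ * phiE γ (eσ σ)) * u σ ≤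
      c1 * F σ + (-ρn1) * (a σ * u σ) + d * (F σ * eσ σ) := by
    intro σ hσ
    rw [hρσ σ hσ, heσ σ hσ, hF σ hσ, hρσ σ hσ]
    by_cases hu : 0 ≤ u σ
    · simp only [hu, if_true, hc1_def, phiRho]
      exact le_of_eq (by ring)
    · simp only [hu, if_false]
      have hu' : u σ < 0 := lt_of_not_ge hu
      have hau : a σ * u σ ≤ 0 := mul_nonpos_of_nonneg_of_nonpos (ha σ hσ) hu'.le
      have hρLσ := hρL σ hσ
      have heLσ := heL σ hσ
      have hA : (Real.log ρn1 + 1) * ρL σ - ρn1 ≤ phiRho (ρL σ) := by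
        have := key_log ρn1 (ρL σ) hρn1 hρLσ
        simp only [phiRho]; nlinarith
      have hB : phiE γ en1 + d * (eL σ - en1) ≤ phiE γ (eL σ) := by
        have h2 := key_log (eL σ) en1 heLσ hen1
        simp only [phiE, hd_def]
        rw [div_add' _ _ _ hγ1.ne', div_le_div_iff₀ hγ1 hγ1]
        have hne : ((γ - 1) * en1) ≠ 0 := by positivity
        have key : -(((γ - 1) * en1)⁻¹ * (eL σ - en1)) * (γ - 1) * en1
            = -(eL σ - en1) := by field_simp
        nlinarith [key_log (eL σ) en1 heLσ hen1,
          mul_pos hγ1 hen1]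
      -- multiply X ≥ Y by a·u ≤ 0
      have hX : (Real.log ρn1 + 1) * ρL σ - ρn1
            + ρL σ * (phiE γ en1 + d * (eL σ - en1))
          ≤ phiRho (ρL σ) + ρL σ * phiE γ (eL σ) := by
        nlinarith [hA, hB, hρLσ]
      have := mul_le_mul_of_nonpos_left hX hau
      calc a σ * (phiRho (ρL σ) + ρL σ * phiE γ (eL σ)) * u σ
          = a σ * u σ * (phiRho (ρL σ) + ρL σ * phiE γ (eL σ)) := by ring
        _ ≤ a σ * u σ * ((Real.log ρn1 + 1) * ρL σ - ρn1
              + ρL σ * (phiE γ en1 + d * (eL σ - en1))) := this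
        _ = c1 * (a σ * ρL σ * u σ) + (-ρn1) * (a σ * u σ)
              + d * (a σ * ρL σ * u σ * eL σ) := by rw [hc1_def]; ring
  -- sum the pointwise bounds
  have hsum : ∑ σ ∈ S, a σ * (phiRho (ρσ σ) + ρσ σ * phiE γ (eσ σ)) * u σ
      ≤ c1 * (∑ σ ∈ S, F σ) + (-ρn1) * (∑ σ ∈ S, a σ * u σ)
        + d * (∑ σ ∈ S, F σ * eσ σ) := by
    calc ∑ σ ∈ S, a σ * (phiRho (ρσ σ) + ρσ σ * phiE γ (eσ σ)) * u σ
        ≤ ∑ σ ∈ S, (c1 * F σ + (-ρn1) * (a σ * u σ) + d * (F σ * eσ σ)) :=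
          Finset.sum_le_sum hpt
      _ = c1 * (∑ σ ∈ S, F σ) + (-ρn1) * (∑ σ ∈ S, a σ * u σ)
            + d * (∑ σ ∈ S, F σ * eσ σ) := by
          simp only [Finset.sum_add_distrib, Finset.mul_sum]
  -- time term bound
  have htime : K / δt * ((phiRho ρn1 + ρn1 * phiE γ en1) - (phiRho ρn + ρn * phiE γ en))
      ≤ c1 * (K / δt * (ρn1 - ρn)) + d * (K / δt * (ρn1 * en1 - ρn * en)) := by
    have hTcore : (phiRho ρn1 + ρn1 * phiE γ en1) - (phiRho ρn + ρn * phiE γ en)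
        ≤ c1 * (ρn1 - ρn) + d * (ρn1 * en1 - ρn * en) := by
      have h1 := key_log ρn1 ρn hρn1 hρn
      have h2 := key_log en en1 hen hen1
      have h2' : ρn / ((γ - 1) * en1) * (en1 - en)
          ≤ ρn / ((γ - 1) * en1) * (en1 * (Real.log en1 - Real.log en)) :=
        mul_le_mul_of_nonneg_left h2 (by positivity)
      have s1 : 0 ≤ ρn * Real.log ρn - ρn * Real.log ρn1 - (ρn - ρn1) := by
        have hr : ρn * (Real.log ρn - Real.log ρn1)
            = ρn * Real.log ρn - ρn * Real.log ρn1 := by ring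
        linarith [h1, hr.ge, hr.le]
      have s2 : 0 ≤ ρn / ((γ - 1) * en1) * (en1 * (Real.log en1 - Real.log en))
          - ρn / ((γ - 1) * en1) * (en1 - en) := by linarith
      have hid : c1 * (ρn1 - ρn) + d * (ρn1 * en1 - ρn * en)
            - ((phiRho ρn1 + ρn1 * phiE γ en1) - (phiRho ρn + ρn * phiE γ en))
          = (ρn * Real.log ρn - ρn * Real.log ρn1 - (ρn - ρn1))
            + (ρn / ((γ - 1) * en1) * (en1 * (Real.log en1 - Real.log en))
              - ρn / ((γ - 1) * en1) * (en1 - en)) := by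
        rw [hc1_def, hd_def]
        simp only [phiRho, phiE]
        field_simp
        ring
      linarith [s1, s2, hid.ge, hid.le]
    have hKδt : 0 ≤ K / δt := by positivity
    calc K / δt * ((phiRho ρn1 + ρn1 * phiE γ en1) - (phiRho ρn + ρn * phiE γ en))
        ≤ K / δt * (c1 * (ρn1 - ρn) + d * (ρn1 * en1 - ρn * en)) :=
          mul_le_mul_of_nonneg_left hTcore hKδt
      _ = c1 * (K / δt * (ρn1 - ρn)) + d * (K / δt * (ρn1 * en1 - ρn * en)) := by ring
  -- combine everything
  have hE : -(p * ∑ σ ∈ S, a σ * u σ)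
      ≤ K / δt * (ρn1 * en1 - ρn * en) + ∑ σ ∈ S, F σ * eσ σ := by linarith
  have hdE : d * (K / δt * (ρn1 * en1 - ρn * en) + ∑ σ ∈ S, F σ * eσ σ)
      ≤ d * (-(p * ∑ σ ∈ S, a σ * u σ)) := mul_le_mul_of_nonpos_left hE hd_neg
  have hdp : d * p = -ρn1 := by
    rw [hd_def, hp]; field_simp
  have hmass' : K / δt * (ρn1 - ρn) = -∑ σ ∈ S, F σ := by linarith
  calc K / δt * ((phiRho ρn1 + ρn1 * phiE γ en1) - (phiRho ρn + ρn * phiE γ en))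
      + ∑ σ ∈ S, a σ * (phiRho (ρσ σ) + ρσ σ * phiE γ (eσ σ)) * u σ
      ≤ c1 * (K / δt * (ρn1 - ρn)) + d * (K / δt * (ρn1 * en1 - ρn * en))
        + (c1 * (∑ σ ∈ S, F σ) + (-ρn1) * (∑ σ ∈ S, a σ * u σ)
          + d * (∑ σ ∈ S, F σ * eσ σ)) := by linarith
    _ = c1 * (K / δt * (ρn1 - ρn) + ∑ σ ∈ S, F σ)
        + d * (K / δt * (ρn1 * en1 - ρn * en) + ∑ σ ∈ S, F σ * eσ σ)
        + (-ρn1) * (∑ σ ∈ S, a σ * u σ) := by ring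
    _ ≤ c1 * 0 + d * (-(p * ∑ σ ∈ S, a σ * u σ))
        + (-ρn1) * (∑ σ ∈ S, a σ * u σ) := by
        rw [hmass]; linarith
    _ = (-(d * p) + (-ρn1)) * (∑ σ ∈ S, a σ * u σ) := by ring
    _ = 0 := by rw [hdp]; ring
end

section
/- Let I ⊆ ℝ be an interval and let φ : I → ℝ be strictly convex and continuously differentiable on I. Let x_K ∈ I and x_L ∈ I with x_K ≠ x_L. Then there exists a unique real number x_KL ∈ [[x_K,x_L]] such that φ(x_K) + φ'(x_K)·(x_KL − x_K) = φ(x_L) + φ'(x_L)·(x_KL − x_L). -/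
/-!
A strictly convex function lies strictly above each of its tangent lines away from the point of
tangency, so at `x_K` the tangent at `x_L` lies below the tangent at `x_K`, and at `x_L` the
reverse holds. The difference of the two tangent lines is therefore an affine function changing
sign on `[[x_K, x_L]]`: it vanishes there by the intermediate value theorem, and only once since
its slope `φ'(x_K) - φ'(x_L)` is nonzero.
-/

open Set

theorem StrictConvexOn.add_mul_sub_lt_of_hasDerivWithinAt {I : Set ℝ} {φ : ℝ → ℝ} {a b d : ℝ}
    (hconv : StrictConvexOn ℝ I φ) (ha : a ∈ I) (hb : b ∈ I) (hab : a ≠ b)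
    (hd : HasDerivWithinAt φ d I a) :
    φ a + d * (b - a) < φ b := by
  rcases hab.lt_or_gt with hlt | hgt
  · have hslope := hconv.lt_slope_of_hasDerivWithinAt ha hb hlt hd
    rw [slope_def_field, lt_div_iff₀ (sub_pos.mpr hlt)] at hslope
    linarith
  · have hslope := hconv.slope_lt_of_hasDerivWithinAt hb ha hgt hd
    rw [slope_def_field, div_lt_iff₀ (sub_pos.mpr hgt)] at hslope
    linarith

theorem existsUnique_mem_uIcc_line_eq {a b y₁ y₂ m₁ m₂ : ℝ}
    (h₁ : y₁ + m₁ * (b - a) < y₂) (h₂ : y₂ + m₂ * (a - b) < y₁) :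
    ∃! x, x ∈ uIcc a b ∧ y₁ + m₁ * (x - a) = y₂ + m₂ * (x - b) := by
  set g : ℝ → ℝ := fun x ↦ y₁ + m₁ * (x - a) - (y₂ + m₂ * (x - b)) with hg
  have hsign : (0 : ℝ) ∈ uIcc (g a) (g b) := by
    rw [mem_uIcc]
    right
    constructor <;> simp only [hg] <;> linarith
  have hslope : m₁ - m₂ ≠ 0 := by
    intro h
    rw [sub_eq_zero.mp h] at h₁
    linarith
  obtain ⟨x, hx, hgx⟩ := intermediate_value_uIcc (by fun_prop : ContinuousOn g (uIcc a b)) hsign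
  refine ⟨x, ⟨hx, sub_eq_zero.mp hgx⟩, fun y ⟨_, hy⟩ ↦ ?_⟩
  have hroots : (m₁ - m₂) * (y - x) = 0 := by
    simp only [hg] at hgx
    linear_combination hy - hgx
  exact sub_eq_zero.mp ((mul_eq_zero.mp hroots).resolve_left hslope)

theorem tangent_intersection_exists_unique_general
    (I : Set ℝ) (φ φ' : ℝ → ℝ)
    (hdiff : ∀ x ∈ I, HasDerivWithinAt φ (φ' x) I x)
    (hconv : StrictConvexOn ℝ I φ)
    (xK xL : ℝ) (hxK : xK ∈ I) (hxL : xL ∈ I) (hne : xK ≠ xL) :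
    ∃! x : ℝ, x ∈ Set.uIcc xK xL ∧
      φ xK + φ' xK * (x - xK) = φ xL + φ' xL * (x - xL) :=
  existsUnique_mem_uIcc_line_eq
    (hconv.add_mul_sub_lt_of_hasDerivWithinAt hxK hxL hne (hdiff xK hxK))
    (hconv.add_mul_sub_lt_of_hasDerivWithinAt hxL hxK hne.symm (hdiff xL hxL))

/-- Tangent-intersection point (Lemma 2.6): for a strictly convex continuously
differentiable function `φ` on an interval `I` and `x_K ≠ x_L` in `I`, there is a
unique point `x_KL ∈ [[x_K, x_L]]` where the tangent lines at `x_K` and `x_L`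
take the same value. Here `φ'` denotes the (one-sided, within `I`) derivative of `φ`. -/
theorem tangent_intersection_exists_unique
    (I : Set ℝ) (hI : Convex ℝ I) (φ φ' : ℝ → ℝ)
    (hdiff : ∀ x ∈ I, HasDerivWithinAt φ (φ' x) I x)
    (hcont : ContinuousOn φ' I)
    (hconv : StrictConvexOn ℝ I φ)
    (xK xL : ℝ) (hxK : xK ∈ I) (hxL : xL ∈ I) (hne : xK ≠ xL) :
    ∃! x : ℝ, x ∈ Set.uIcc xK xL ∧
      φ xK + φ' xK * (x - xK) = φ xL + φ' xL * (x - xL) :=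
  tangent_intersection_exists_unique_general I φ φ' hdiff hconv xK xL hxK hxL hne
end

section
/- Let I ⊆ ℝ be an interval and let φ : I → ℝ be strictly convex and continuously differentiable on I. Let x_K, x_L ∈ I, and let x_KL ∈ [[x_K,x_L]] satisfy φ(x_K) + φ'(x_K)·(x_KL − x_K) = φ(x_L) + φ'(x_L)·(x_KL − x_L) when x_K ≠ x_L, with x_KL = x_K when x_K = x_L. Let u ∈ ℝ and let x_σ ∈ I satisfy: x_σ ∈ [[x_K, x_KL]] if u ≥ 0, and x_σ ∈ [[x_L, x_KL]] if u < 0. Then (1/2)·(φ'(x_K) − φ'(x_L))·(x_σ − x_KL)·u ≥ 0. -/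
/-- Strict monotonicity of `φ'` from strict convexity, via slopes. -/
lemma phi'_strictMono {I : Set ℝ} {φ φ' : ℝ → ℝ}
    (hdiff : ∀ x ∈ I, HasDerivWithinAt φ (φ' x) I x)
    (hconv : StrictConvexOn ℝ I φ) {a b : ℝ} (ha : a ∈ I) (hb : b ∈ I)
    (hab : a < b) : φ' a < φ' b :=
  (hconv.lt_slope_of_hasDerivWithinAt ha hb hab (hdiff a ha)).trans
    (hconv.slope_lt_of_hasDerivWithinAt ha hb hab (hdiff b hb))

/-- Sign property of the reduced-diffusion face interpolation: if `x_KL` is the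
tangent-intersection point of the strictly convex `C¹` function `φ` at `x_K`, `x_L`,
and the face value `x_σ` satisfies the limitation condition (upwind side between the
upwind value and `x_KL`), then `(1/2)(φ'(x_K) − φ'(x_L))(x_σ − x_KL) u ≥ 0`. -/
theorem tangent_intersection_sign
    (I : Set ℝ) (hI : Convex ℝ I) (φ φ' : ℝ → ℝ)
    (hdiff : ∀ x ∈ I, HasDerivWithinAt φ (φ' x) I x)
    (hcont : ContinuousOn φ' I)
    (hconv : StrictConvexOn ℝ I φ)
    (xK xL : ℝ) (hxK : xK ∈ I) (hxL : xL ∈ I)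
    (xKL : ℝ) (hKLmem : xKL ∈ Set.uIcc xK xL)
    (hKLtan : xK ≠ xL →
      φ xK + φ' xK * (xKL - xK) = φ xL + φ' xL * (xKL - xL))
    (hKLeq : xK = xL → xKL = xK)
    (u xσ : ℝ) (hxσ : xσ ∈ I)
    (hface₁ : 0 ≤ u → xσ ∈ Set.uIcc xK xKL)
    (hface₂ : u < 0 → xσ ∈ Set.uIcc xL xKL) :
    0 ≤ 1 / 2 * (φ' xK - φ' xL) * (xσ - xKL) * u := by
  rcases lt_trichotomy xK xL with hlt | heq | hgt
  · -- xK < xL : φ' xK < φ' xL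
    have hd : φ' xK < φ' xL := phi'_strictMono hdiff hconv hxK hxL hlt
    rw [Set.uIcc_of_le hlt.le] at hKLmem
    rcases le_or_gt 0 u with hu | hu
    · have hσ := hface₁ hu
      rw [Set.uIcc_of_le hKLmem.1] at hσ
      have h : 0 ≤ (φ' xL - φ' xK) * (xKL - xσ) * u :=
        mul_nonneg (mul_nonneg (by linarith) (by linarith [hσ.2])) hu
      linarith [h]
    · have hσ := hface₂ hu
      rw [Set.uIcc_of_ge hKLmem.2] at hσ
      have h : 0 ≤ (φ' xL - φ' xK) * (xσ - xKL) * (-u) :=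
        mul_nonneg (mul_nonneg (by linarith) (by linarith [hσ.1])) (by linarith)
      linarith [h]
  · simp [hKLeq heq, heq]
  · have hd : φ' xL < φ' xK := phi'_strictMono hdiff hconv hxL hxK hgt
    rw [Set.uIcc_of_ge hgt.le] at hKLmem
    rcases le_or_gt 0 u with hu | hu
    · have hσ := hface₁ hu
      rw [Set.uIcc_of_ge hKLmem.2] at hσ
      have h : 0 ≤ (φ' xK - φ' xL) * (xσ - xKL) * u :=
        mul_nonneg (mul_nonneg (by linarith) (by linarith [hσ.1])) hu
      linarith [h]
    · have hσ := hface₂ hu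
      rw [Set.uIcc_of_le hKLmem.1] at hσ
      have h : 0 ≤ (φ' xK - φ' xL) * (xKL - xσ) * (-u) :=
        mul_nonneg (mul_nonneg (by linarith) (by linarith [hσ.2])) (by linarith)
      linarith [h]
end

section
/- Let γ>1. Let S be a finite set, and for σ∈S let a_σ≥0, u_σ∈ℝ and a neighbour density ρ_{L,σ}>0; let |K|>0, δt>0, ρⁿ>0, ρⁿ⁺¹>0. For each σ∈S, let ρ_{KL,σ} ∈ [[ρⁿ⁺¹, ρ_{L,σ}]] be the unique point with φ_ρ(ρⁿ⁺¹)+φ_ρ'(ρⁿ⁺¹)(ρ_{KL,σ}−ρⁿ⁺¹) = φ_ρ(ρ_{L,σ})+φ_ρ'(ρ_{L,σ})(ρ_{KL,σ}−ρ_{L,σ}) if ρⁿ⁺¹ ≠ ρ_{L,σ}, and ρ_{KL,σ}=ρⁿ⁺¹ otherwise, and let the face density ρ_σ>0 satisfy: ρ_σ ∈ [[ρⁿ⁺¹, ρ_{KL,σ}]] if u_σ ≥ 0, and ρ_σ ∈ [[ρ_{L,σ}, ρ_{KL,σ}]] if u_σ < 0. Assume the discrete mass balance (|K|/δt)(ρⁿ⁺¹−ρⁿ)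 + Σ_{σ∈S} a_σ ρ_σ u_σ = 0. Define (δφ_ρ)_σ = φ_ρ(ρⁿ⁺¹) − φ_ρ(ρ_σ) + φ_ρ'(ρⁿ⁺¹)(ρ_{KL,σ}−ρⁿ⁺¹) + (1/2)(φ_ρ'(ρⁿ⁺¹)+φ_ρ'(ρ_{L,σ}))·(ρ_σ−ρ_{KL,σ}). Then (|K|/δt)(φ_ρ(ρⁿ⁺¹)−φ_ρ(ρⁿ)) + Σ_{σ∈S} a_σ φ_ρ(ρ_σ) u_σ + (ρⁿ⁺¹ φ_ρ'(ρⁿ⁺¹) − φ_ρ(ρⁿ⁺¹))·Σ_{σ∈S} a_σ u_σ + Σ_{σ∈S} a_σ (δφ_ρ)_σ u_σ ≤ 0. -/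
/-- `φ_ρ'(z) = log z + 1`. -/
noncomputable def phiRho' (z : ℝ) : ℝ := Real.log z + 1

/-- Renormalized mass balance inequality for the implicit reduced-diffusion scheme:
under the limitation assumption `(H_ρ^imp)` relative to the tangent-intersection
points `ρ_{KL,σ}` of `φ_ρ`, the renormalized mass balance holds with the
conservative remainder `Σ_σ a_σ (δφ_ρ)_σ u_σ`. -/
theorem implicit_reduced_diffusion_mass
    {ι : Type*} (S : Finset ι) (a u ρL ρKL ρσ : ι → ℝ)
    (ha : ∀ σ ∈ S, 0 ≤ a σ) (hρL : ∀ σ ∈ S, 0 < ρL σ) (hρσpos : ∀ σ ∈ S, 0 < ρσ σ)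
    (K δt ρn ρn1 : ℝ) (hK : 0 < K) (hδt : 0 < δt) (hρn : 0 < ρn) (hρn1 : 0 < ρn1)
    (hKLmem : ∀ σ ∈ S, ρKL σ ∈ Set.uIcc ρn1 (ρL σ))
    (hKLtan : ∀ σ ∈ S, ρn1 ≠ ρL σ →
      phiRho ρn1 + phiRho' ρn1 * (ρKL σ - ρn1)
        = phiRho (ρL σ) + phiRho' (ρL σ) * (ρKL σ - ρL σ))
    (hKLeq : ∀ σ ∈ S, ρn1 = ρL σ → ρKL σ = ρn1)
    (hface₁ : ∀ σ ∈ S, 0 ≤ u σ → ρσ σ ∈ Set.uIcc ρn1 (ρKL σ))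
    (hface₂ : ∀ σ ∈ S, u σ < 0 → ρσ σ ∈ Set.uIcc (ρL σ) (ρKL σ))
    (hmass : K / δt * (ρn1 - ρn) + ∑ σ ∈ S, a σ * ρσ σ * u σ = 0) :
    K / δt * (phiRho ρn1 - phiRho ρn) + ∑ σ ∈ S, a σ * phiRho (ρσ σ) * u σ
      + (ρn1 * phiRho' ρn1 - phiRho ρn1) * ∑ σ ∈ S, a σ * u σ
      + ∑ σ ∈ S, a σ * (phiRho ρn1 - phiRho (ρσ σ) + phiRho' ρn1 * (ρKL σ - ρn1)
          + 1 / 2 * (phiRho' ρn1 + phiRho' (ρL σ)) * (ρσ σ - ρKL σ)) * u σ ≤ 0 := by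
  -- Per-face remainder sign
  have key : ∀ σ ∈ S,
      a σ * (1 / 2 * (phiRho' (ρL σ) - phiRho' ρn1) * (ρσ σ - ρKL σ)) * u σ ≤ 0 := by
    intro σ hσ
    have haσ := ha σ hσ
    have hL := hρL σ hσ
    have hKL := Set.mem_uIcc.1 (hKLmem σ hσ)
    have hcore : 0 ≤ u σ → (phiRho' (ρL σ) - phiRho' ρn1) * (ρσ σ - ρKL σ) ≤ 0 := by
      intro hu
      have hmem := Set.mem_uIcc.1 (hface₁ σ hσ hu)
      rcases hKL with ⟨h1, h2⟩ | ⟨h1, h2⟩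
      · have hlog : Real.log ρn1 ≤ Real.log (ρL σ) :=
          Real.log_le_log hρn1 (le_trans h1 h2)
        rcases hmem with ⟨h3, h4⟩ | ⟨h3, h4⟩ <;>
          · simp only [phiRho']; nlinarith
      · have hlog : Real.log (ρL σ) ≤ Real.log ρn1 :=
          Real.log_le_log hL (le_trans h1 h2)
        rcases hmem with ⟨h3, h4⟩ | ⟨h3, h4⟩ <;>
          · simp only [phiRho']; nlinarith
    have hcore' : u σ < 0 → 0 ≤ (phiRho' (ρL σ) - phiRho' ρn1) * (ρσ σ - ρKL σ) := by
      intro hu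
      have hmem := Set.mem_uIcc.1 (hface₂ σ hσ hu)
      rcases hKL with ⟨h1, h2⟩ | ⟨h1, h2⟩
      · have hlog : Real.log ρn1 ≤ Real.log (ρL σ) :=
          Real.log_le_log hρn1 (le_trans h1 h2)
        rcases hmem with ⟨h3, h4⟩ | ⟨h3, h4⟩ <;>
          · simp only [phiRho']; nlinarith
      · have hlog : Real.log (ρL σ) ≤ Real.log ρn1 :=
          Real.log_le_log hL (le_trans h1 h2)
        rcases hmem with ⟨h3, h4⟩ | ⟨h3, h4⟩ <;>
          · simp only [phiRho']; nlinarith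
    rcases le_or_gt 0 (u σ) with hu | hu
    · have := hcore hu
      have h1 : a σ * (1 / 2 * (phiRho' (ρL σ) - phiRho' ρn1) * (ρσ σ - ρKL σ)) ≤ 0 := by
        nlinarith
      exact mul_nonpos_of_nonpos_of_nonneg h1 hu
    · have := hcore' hu
      have h1 : 0 ≤ a σ * (1 / 2 * (phiRho' (ρL σ) - phiRho' ρn1) * (ρσ σ - ρKL σ)) := by
        nlinarith
      exact mul_nonpos_of_nonneg_of_nonpos h1 hu.le
  -- Rearrange the three sums
  have hsum : (∑ σ ∈ S, a σ * phiRho (ρσ σ) * u σ)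
      + (ρn1 * phiRho' ρn1 - phiRho ρn1) * ∑ σ ∈ S, a σ * u σ
      + ∑ σ ∈ S, a σ * (phiRho ρn1 - phiRho (ρσ σ) + phiRho' ρn1 * (ρKL σ - ρn1)
          + 1 / 2 * (phiRho' ρn1 + phiRho' (ρL σ)) * (ρσ σ - ρKL σ)) * u σ
      = phiRho' ρn1 * (∑ σ ∈ S, a σ * ρσ σ * u σ)
        + ∑ σ ∈ S, a σ * (1 / 2 * (phiRho' (ρL σ) - phiRho' ρn1) * (ρσ σ - ρKL σ)) * u σ := by
    rw [Finset.mul_sum, Finset.mul_sum, ← Finset.sum_add_distrib, ← Finset.sum_add_distrib,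
      ← Finset.sum_add_distrib]
    exact Finset.sum_congr rfl fun σ _ => by ring
  have hmass' : (∑ σ ∈ S, a σ * ρσ σ * u σ) = -(K / δt * (ρn1 - ρn)) := by linarith
  -- Convexity inequality
  have hconv : phiRho ρn1 - phiRho ρn - phiRho' ρn1 * (ρn1 - ρn) ≤ 0 := by
    have hlog : Real.log (ρn1 / ρn) ≤ ρn1 / ρn - 1 :=
      Real.log_le_sub_one_of_pos (div_pos hρn1 hρn)
    rw [Real.log_div hρn1.ne' hρn.ne'] at hlog
    have h2 : ρn * (Real.log ρn1 - Real.log ρn) ≤ ρn1 - ρn := by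
      have := mul_le_mul_of_nonneg_left hlog hρn.le
      calc ρn * (Real.log ρn1 - Real.log ρn) ≤ ρn * (ρn1 / ρn - 1) := this
        _ = ρn1 - ρn := by field_simp
    simp only [phiRho, phiRho']; nlinarith
  have hrem : ∑ σ ∈ S, a σ * (1 / 2 * (phiRho' (ρL σ) - phiRho' ρn1) * (ρσ σ - ρKL σ)) * u σ ≤ 0 :=
    Finset.sum_nonpos key
  have hKt : 0 < K / δt := div_pos hK hδt
  calc K / δt * (phiRho ρn1 - phiRho ρn) + ∑ σ ∈ S, a σ * phiRho (ρσ σ) * u σ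
      + (ρn1 * phiRho' ρn1 - phiRho ρn1) * ∑ σ ∈ S, a σ * u σ
      + ∑ σ ∈ S, a σ * (phiRho ρn1 - phiRho (ρσ σ) + phiRho' ρn1 * (ρKL σ - ρn1)
          + 1 / 2 * (phiRho' ρn1 + phiRho' (ρL σ)) * (ρσ σ - ρKL σ)) * u σ
      = K / δt * (phiRho ρn1 - phiRho ρn - phiRho' ρn1 * (ρn1 - ρn))
        + ∑ σ ∈ S, a σ * (1 / 2 * (phiRho' (ρL σ) - phiRho' ρn1) * (ρσ σ - ρKL σ)) * u σ := by
        have := hsum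
        rw [hmass'] at this
        linarith
    _ ≤ 0 := by nlinarith
end

section
/- Consider discrete mesh data with time levels n=0,…,N and per-face oriented velocities u_f^{n} with |u_f^{n}| ≤ M for a real M>1. Suppose ρ_K^{n} ∈ [1/M, M] for every cell K and every n. For each internal face f and 1 ≤ n ≤ N let ρ_{KL,f}^{n} ∈ [[ρ_{K_f}^{n}, ρ_{L_f}^{n}]] be the tangent-intersection point of φ_ρ at ρ_{K_f}^{n} and ρ_{L_f}^{n} (equal to the common value when they coincide), and let the face density ρ_f^{n} satisfy ρ_f^{n} ∈ [[ρ_{K_f}^{n}, ρ_{KL,f}^{n}]] if u_f^{n} ≥ 0 and ρ_f^{n} ∈ [[ρ_{L_f}^{n}, ρ_{KL,f}^{n}]] otherwise. Define (δφ_ρ)_f^{n} = φ_ρ(ρ_{K_f}^{n}) − φ_ρ(ρ_f^{n}) + φ_ρ'(ρ_{K_f}^{n})(ρ_{KL,f}^{n}−ρ_{K_f}^{n}) + (1/2)(φ_ρ'(ρ_{K_f}^{n})+φ_ρ'(ρ_{L_f}^{n}))·(ρ_f^{n}−ρ_{KL,f}^{n}) and |K|·(δR_m)_K^{n} = Σ_{f∈E(K)}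 |σ_f|·(δφ_ρ)_f^{n}·u_{K,f}^{n}. Then for every h>0, G≥0 and every family of reals (ψ_K^{n}) such that |ψ_{K_f}^{n} − ψ_{L_f}^{n}| ≤ G·h for every internal face f and every n, one has |Σ_{n=0}^{N−1} δt Σ_{K∈C} |K|·(δR_m)_K^{n+1}·ψ_K^{n+1}| ≤ 3·M·|φ_ρ'|_∞·G·h·Σ_{n=0}^{N−1} δt Σ_{f∈F} |σ_f|·|ρ_{K_f}^{n+1}−ρ_{L_f}^{n+1}|, where |φ_ρ'|_∞ = max(|φ_ρ'(1/M)|, |φ_ρ'(M)|). -/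
/-- The set `E(K)` of faces incident to the cell `K`. -/
def cellFaces {Cell Face : Type*} [Fintype Face] [DecidableEq Cell]
    (Kf Lf : Face → Cell) (Kc : Cell) : Finset Face :=
  Finset.univ.filter (fun f => Kf f = Kc ∨ Lf f = Kc)

/-- Oriented normal velocity `u_{K,f}`: equal to `u_f` if `K = K_f` and to `-u_f`
if `K = L_f`. -/
def orientedVel {Cell Face : Type*} [DecidableEq Cell]
    (Kf : Face → Cell) (uf : Face → ℝ) (Kc : Cell) (f : Face) : ℝ :=
  if Kf f = Kc then uf f else -uf f

/-- The per-face quantity `(δφ)_σ` of the reduced-diffusion remainder. -/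
noncomputable def dphi (φ φ' : ℝ → ℝ) (xK xL xKL xσ : ℝ) : ℝ :=
  φ xK - φ xσ + φ' xK * (xKL - xK) + 1 / 2 * (φ' xK + φ' xL) * (xσ - xKL)

/- Auxiliary: distance between two points of `[[a,b]]` is at most `|a - b|`. -/
lemma abs_sub_le_of_mem_uIcc' {a b c d : ℝ} (hc : c ∈ Set.uIcc a b)
    (hd : d ∈ Set.uIcc a b) : |c - d| ≤ |a - b| := by
  rw [Set.mem_uIcc] at hc hd
  have h1 := le_abs_self (a - b)
  have h2 := neg_abs_le (a - b)
  rw [abs_sub_le_iff]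
  rcases hc with ⟨_, _⟩ | ⟨_, _⟩ <;> rcases hd with ⟨_, _⟩ | ⟨_, _⟩ <;>
    constructor <;> linarith

/- Auxiliary: summation by parts over faces. -/
lemma cell_face_swap {Cell Face : Type*} [Fintype Cell] [Fintype Face]
    [DecidableEq Cell] (Kf Lf : Face → Cell) (hKL : ∀ f, Kf f ≠ Lf f)
    (uf : Face → ℝ) (c : Face → ℝ) (ψ : Cell → ℝ) :
    ∑ Kc : Cell, (∑ f ∈ cellFaces Kf Lf Kc, c f * orientedVel Kf uf Kc f) * ψ Kc
      = ∑ f : Face, c f * uf f * (ψ (Kf f) - ψ (Lf f)) := by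
  simp only [Finset.sum_mul, cellFaces, Finset.sum_filter]
  rw [Finset.sum_comm]
  refine Finset.sum_congr rfl fun f _ => ?_
  have key : (Finset.univ.filter (fun Kc : Cell => Kf f = Kc ∨ Lf f = Kc))
      = {Kf f, Lf f} := by
    ext Kc
    simp [eq_comm, or_comm]
  simp only [ite_mul, zero_mul]
  rw [← Finset.sum_filter, key, Finset.sum_pair (hKL f)]
  simp only [orientedVel, if_pos rfl, if_neg (hKL f), if_true]
  ring

/- Auxiliary: bound on `|φ'|` on the interval `[1/M, M]`. -/
lemma phiRho'_bound {M z : ℝ} (hM : 1 < M) (hz : z ∈ Set.Icc (1 / M) M) :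
    |phiRho' z| ≤ max |phiRho' (1 / M)| |phiRho' M| := by
  have hMpos : (0 : ℝ) < M := by linarith
  have hinv : (0 : ℝ) < 1 / M := by positivity
  have h1 : phiRho' (1 / M) ≤ phiRho' z := by
    have := Real.log_le_log hinv hz.1
    unfold phiRho'; linarith
  have h2 : phiRho' z ≤ phiRho' M := by
    have := Real.log_le_log (lt_of_lt_of_le hinv hz.1) hz.2
    unfold phiRho'; linarith
  rw [abs_le]
  constructor
  · have := neg_abs_le (phiRho' (1 / M))
    have := le_max_left |phiRho' (1 / M)| |phiRho' M|
    linarith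
  · have := le_abs_self (phiRho' M)
    have := le_max_right |phiRho' (1 / M)| |phiRho' M|
    linarith

/- Auxiliary: the key pointwise bound on `dphi`. -/
lemma dphi_le {M : ℝ} (hM : 1 < M) {xK xL xKL xσ : ℝ}
    (hxK : xK ∈ Set.Icc (1 / M) M) (hxL : xL ∈ Set.Icc (1 / M) M)
    (hKLm : xKL ∈ Set.uIcc xK xL) (hσ : xσ ∈ Set.uIcc xK xL) :
    |dphi phiRho phiRho' xK xL xKL xσ|
      ≤ 3 * max |phiRho' (1 / M)| |phiRho' M| * |xK - xL| := by
  set D := max |phiRho' (1 / M)| |phiRho' M| with hD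
  have hDnn : 0 ≤ D := le_trans (abs_nonneg _) (le_max_left _ _)
  have hMpos : (0 : ℝ) < M := by linarith
  have hinv : (0 : ℝ) < 1 / M := by positivity
  have hσI : xσ ∈ Set.Icc (1 / M) M :=
    ((Set.ordConnected_Icc).uIcc_subset hxK hxL) hσ
  -- Lipschitz bound via the mean value inequality
  have hlip : |phiRho xK - phiRho xσ| ≤ D * |xK - xσ| := by
    have hderiv : ∀ z ∈ Set.Icc (1 / M) M,
        HasDerivWithinAt phiRho (phiRho' z) (Set.Icc (1 / M) M) z := fun z hz =>
      (Real.hasDerivAt_mul_log (ne_of_gt (lt_of_lt_of_le hinv hz.1))).hasDerivWithinAt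
    have hbd : ∀ z ∈ Set.Icc (1 / M) M, ‖phiRho' z‖ ≤ D := fun z hz => by
      rw [Real.norm_eq_abs]; exact phiRho'_bound hM hz
    have := (convex_Icc (1 / M) M).norm_image_sub_le_of_norm_hasDerivWithin_le
      hderiv hbd hσI hxK
    simpa [Real.norm_eq_abs] using this
  have e1 : |xK - xσ| ≤ |xK - xL| :=
    abs_sub_le_of_mem_uIcc' Set.left_mem_uIcc hσ
  have e2 : |xKL - xK| ≤ |xK - xL| :=
    abs_sub_le_of_mem_uIcc' hKLm Set.left_mem_uIcc
  have e3 : |xσ - xKL| ≤ |xK - xL| :=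
    abs_sub_le_of_mem_uIcc' hσ hKLm
  have bK : |phiRho' xK| ≤ D := phiRho'_bound hM hxK
  have bL : |phiRho' xL| ≤ D := phiRho'_bound hM hxL
  have t1 : |phiRho xK - phiRho xσ| ≤ D * |xK - xL| :=
    hlip.trans (mul_le_mul_of_nonneg_left e1 hDnn)
  have t2 : |phiRho' xK * (xKL - xK)| ≤ D * |xK - xL| := by
    rw [abs_mul]
    exact mul_le_mul bK e2 (abs_nonneg _) hDnn
  have t3 : |1 / 2 * (phiRho' xK + phiRho' xL) * (xσ - xKL)| ≤ D * |xK - xL| := by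
    rw [abs_mul]
    have hmid : |1 / 2 * (phiRho' xK + phiRho' xL)| ≤ D := by
      rw [abs_mul]
      have := abs_add_le (phiRho' xK) (phiRho' xL)
      rw [abs_of_pos (by norm_num : (0:ℝ) < 1/2)]
      linarith
    exact mul_le_mul hmid e3 (abs_nonneg _) hDnn
  have habs : |dphi phiRho phiRho' xK xL xKL xσ|
      ≤ |phiRho xK - phiRho xσ| + |phiRho' xK * (xKL - xK)|
        + |1 / 2 * (phiRho' xK + phiRho' xL) * (xσ - xKL)| := by
    unfold dphi
    exact (abs_add_le _ _).trans (by gcongr; exact abs_add_le _ _)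
  linarith

/-- Weak (dual-norm) estimate on the conservative remainder `δR_m` of the renormalized
mass balance for the reduced-diffusion scheme (Lemma 2.9). -/
theorem weak_estimate_mass_remainder
    (M : ℝ) (hM : 1 < M)
    (Cell Face : Type*) [Fintype Cell] [Fintype Face] [DecidableEq Cell]
    (Kf Lf : Face → Cell) (hKL : ∀ f, Kf f ≠ Lf f)
    (area : Face → ℝ) (harea : ∀ f, 0 < area f)
    (measK : Cell → ℝ) (hmeas : ∀ Kc, 0 < measK Kc)
    (N : ℕ) (δt : ℝ) (hδt : 0 < δt)
    (uf : Face → ℕ → ℝ) (hu : ∀ f n, n ≤ N → |uf f n| ≤ M)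
    (ρ : Cell → ℕ → ℝ) (hρ : ∀ Kc n, n ≤ N → ρ Kc n ∈ Set.Icc (1 / M) M)
    (ρKL ρf : Face → ℕ → ℝ)
    (hKLmem : ∀ f n, 1 ≤ n → n ≤ N → ρKL f n ∈ Set.uIcc (ρ (Kf f) n) (ρ (Lf f) n))
    (hKLtan : ∀ f n, 1 ≤ n → n ≤ N → ρ (Kf f) n ≠ ρ (Lf f) n →
      phiRho (ρ (Kf f) n) + phiRho' (ρ (Kf f) n) * (ρKL f n - ρ (Kf f) n)
        = phiRho (ρ (Lf f) n) + phiRho' (ρ (Lf f) n) * (ρKL f n - ρ (Lf f) n))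
    (hKLeq : ∀ f n, 1 ≤ n → n ≤ N → ρ (Kf f) n = ρ (Lf f) n → ρKL f n = ρ (Kf f) n)
    (hface₁ : ∀ f n, 1 ≤ n → n ≤ N → 0 ≤ uf f n →
      ρf f n ∈ Set.uIcc (ρ (Kf f) n) (ρKL f n))
    (hface₂ : ∀ f n, 1 ≤ n → n ≤ N → uf f n < 0 →
      ρf f n ∈ Set.uIcc (ρ (Lf f) n) (ρKL f n))
    (h G : ℝ) (hh : 0 < h) (hG : 0 ≤ G)
    (ψ : Cell → ℕ → ℝ)
    (hψ : ∀ f n, n ≤ N → |ψ (Kf f) n - ψ (Lf f) n| ≤ G * h) :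
    |∑ n ∈ Finset.range N, δt * ∑ Kc : Cell,
        (∑ f ∈ cellFaces Kf Lf Kc,
          area f *
            dphi phiRho phiRho' (ρ (Kf f) (n + 1)) (ρ (Lf f) (n + 1))
              (ρKL f (n + 1)) (ρf f (n + 1)) *
            orientedVel Kf (fun f' => uf f' (n + 1)) Kc f) * ψ Kc (n + 1)|
      ≤ 3 * M * max |phiRho' (1 / M)| |phiRho' M| * G * h *
          ∑ n ∈ Finset.range N, δt * ∑ f : Face,
            area f * |ρ (Kf f) (n + 1) - ρ (Lf f) (n + 1)| := by
  set D := max |phiRho' (1 / M)| |phiRho' M| with hD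
  have hDnn : 0 ≤ D := le_trans (abs_nonneg _) (le_max_left _ _)
  have hMpos : (0 : ℝ) < M := by linarith
  -- per time-step bound
  have key : ∀ n ∈ Finset.range N,
      |∑ Kc : Cell, (∑ f ∈ cellFaces Kf Lf Kc,
          area f *
            dphi phiRho phiRho' (ρ (Kf f) (n + 1)) (ρ (Lf f) (n + 1))
              (ρKL f (n + 1)) (ρf f (n + 1)) *
            orientedVel Kf (fun f' => uf f' (n + 1)) Kc f) * ψ Kc (n + 1)|
        ≤ 3 * M * D * G * h *
          ∑ f : Face, area f * |ρ (Kf f) (n + 1) - ρ (Lf f) (n + 1)| := by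
    intro n hn
    have hnN : n + 1 ≤ N := Finset.mem_range.mp hn
    have hn1 : 1 ≤ n + 1 := Nat.succ_le_succ (Nat.zero_le n)
    have heq : ∑ Kc : Cell, (∑ f ∈ cellFaces Kf Lf Kc,
          area f *
            dphi phiRho phiRho' (ρ (Kf f) (n + 1)) (ρ (Lf f) (n + 1))
              (ρKL f (n + 1)) (ρf f (n + 1)) *
            orientedVel Kf (fun f' => uf f' (n + 1)) Kc f) * ψ Kc (n + 1)
        = ∑ f : Face, (area f *
            dphi phiRho phiRho' (ρ (Kf f) (n + 1)) (ρ (Lf f) (n + 1))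
              (ρKL f (n + 1)) (ρf f (n + 1))) * uf f (n + 1) *
            (ψ (Kf f) (n + 1) - ψ (Lf f) (n + 1)) :=
      cell_face_swap Kf Lf hKL (fun f' => uf f' (n + 1))
        (fun f => area f *
            dphi phiRho phiRho' (ρ (Kf f) (n + 1)) (ρ (Lf f) (n + 1))
              (ρKL f (n + 1)) (ρf f (n + 1)))
        (fun Kc => ψ Kc (n + 1))
    rw [heq]
    refine (Finset.abs_sum_le_sum_abs _ _).trans ?_
    rw [Finset.mul_sum]
    refine Finset.sum_le_sum fun f _ => ?_
    -- per-face bound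
    have hσmem : ρf f (n + 1) ∈ Set.uIcc (ρ (Kf f) (n + 1)) (ρ (Lf f) (n + 1)) := by
      rcases le_or_gt 0 (uf f (n + 1)) with hpos | hneg
      · exact Set.uIcc_subset_uIcc Set.left_mem_uIcc (hKLmem f (n + 1) hn1 hnN)
          (hface₁ f (n + 1) hn1 hnN hpos)
      · exact Set.uIcc_subset_uIcc Set.right_mem_uIcc (hKLmem f (n + 1) hn1 hnN)
          (hface₂ f (n + 1) hn1 hnN hneg)
    have hd : |dphi phiRho phiRho' (ρ (Kf f) (n + 1)) (ρ (Lf f) (n + 1))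
        (ρKL f (n + 1)) (ρf f (n + 1))|
        ≤ 3 * D * |ρ (Kf f) (n + 1) - ρ (Lf f) (n + 1)| :=
      dphi_le hM (hρ (Kf f) (n + 1) hnN) (hρ (Lf f) (n + 1) hnN)
        (hKLmem f (n + 1) hn1 hnN) hσmem
    have hu' : |uf f (n + 1)| ≤ M := hu f (n + 1) hnN
    have hψ' : |ψ (Kf f) (n + 1) - ψ (Lf f) (n + 1)| ≤ G * h := hψ f (n + 1) hnN
    rw [abs_mul, abs_mul, abs_mul, abs_of_pos (harea f)]
    calc area f * |dphi phiRho phiRho' (ρ (Kf f) (n + 1)) (ρ (Lf f) (n + 1))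
            (ρKL f (n + 1)) (ρf f (n + 1))| * |uf f (n + 1)| *
            |ψ (Kf f) (n + 1) - ψ (Lf f) (n + 1)|
        ≤ area f * (3 * D * |ρ (Kf f) (n + 1) - ρ (Lf f) (n + 1)|) * M * (G * h) := by
          have h3D : 0 ≤ 3 * D * |ρ (Kf f) (n + 1) - ρ (Lf f) (n + 1)| :=
            mul_nonneg (mul_nonneg (by norm_num) hDnn) (abs_nonneg _)
          gcongr <;>
            first
              | exact (harea f).le
              | exact mul_nonneg (mul_nonneg (harea f).le h3D) hMpos.le
              | exact mul_nonneg (harea f).le h3D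
      _ = 3 * M * D * G * h * (area f * |ρ (Kf f) (n + 1) - ρ (Lf f) (n + 1)|) := by
          ring
  calc |∑ n ∈ Finset.range N, δt * ∑ Kc : Cell,
        (∑ f ∈ cellFaces Kf Lf Kc,
          area f *
            dphi phiRho phiRho' (ρ (Kf f) (n + 1)) (ρ (Lf f) (n + 1))
              (ρKL f (n + 1)) (ρf f (n + 1)) *
            orientedVel Kf (fun f' => uf f' (n + 1)) Kc f) * ψ Kc (n + 1)|
      ≤ ∑ n ∈ Finset.range N, |δt * ∑ Kc : Cell,
        (∑ f ∈ cellFaces Kf Lf Kc,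
          area f *
            dphi phiRho phiRho' (ρ (Kf f) (n + 1)) (ρ (Lf f) (n + 1))
              (ρKL f (n + 1)) (ρf f (n + 1)) *
            orientedVel Kf (fun f' => uf f' (n + 1)) Kc f) * ψ Kc (n + 1)| :=
        Finset.abs_sum_le_sum_abs _ _
    _ ≤ ∑ n ∈ Finset.range N, δt * (3 * M * D * G * h *
          ∑ f : Face, area f * |ρ (Kf f) (n + 1) - ρ (Lf f) (n + 1)|) := by
        refine Finset.sum_le_sum fun n hn => ?_
        rw [abs_mul, abs_of_pos hδt]
        exact mul_le_mul_of_nonneg_left (key n hn) hδt.le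
    _ = 3 * M * D * G * h *
          ∑ n ∈ Finset.range N, δt * ∑ f : Face,
            area f * |ρ (Kf f) (n + 1) - ρ (Lf f) (n + 1)| := by
        rw [Finset.mul_sum]
        exact Finset.sum_congr rfl fun n _ => by ring
end

section
/- Consider discrete mesh data with time levels n=0,…,N, per-face oriented velocities u_f^{n} with |u_f^{n}| ≤ M, per-face densities ρ_f^{n} ∈ (0,M], and cell energies e_K^{n} ∈ [1/M, M], for a real M>1. Set F_{K,f}^{n} = |σ_f|·ρ_f^{n}·u_{K,f}^{n}. For each internal face f and 1 ≤ n ≤ N let e_{KL,f}^{n} ∈ [[e_{K_f}^{n}, e_{L_f}^{n}]] be the tangent-intersection point of φ_e at e_{K_f}^{n} and e_{L_f}^{n} (equal to the common value when they coincide), and let the face energy e_f^{n} satisfy e_f^{n} ∈ [[e_{K_f}^{n}, e_{KL,f}^{n}]] if u_f^{n} ≥ 0 and e_f^{n} ∈ [[e_{L_f}^{n}, e_{KL,f}^{n}]] otherwise. Define (δφ_e)_f^{n} = φ_e(e_{K_f}^{n}) − φ_e(e_f^{n}) + φ_e'(e_{K_f}^{n})(e_{KL,f}^{n}−e_{K_f}^{n})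 + (1/2)(φ_e'(e_{K_f}^{n})+φ_e'(e_{L_f}^{n}))·(e_f^{n}−e_{KL,f}^{n}) and |K|·(δR_e)_K^{n} = Σ_{f∈E(K)} (δφ_e)_f^{n}·F_{K,f}^{n}. Then for every h>0, G≥0 and every family of reals (ψ_K^{n}) such that |ψ_{K_f}^{n} − ψ_{L_f}^{n}| ≤ G·h for every internal face f and every n, one has |Σ_{n=0}^{N−1} δt Σ_{K∈C} |K|·(δR_e)_K^{n+1}·ψ_K^{n+1}| ≤ 3·M²·|φ_e'|_∞·G·h·Σ_{n=0}^{N−1} δt Σ_{f∈F} |σ_f|·|e_{K_f}^{n+1}−e_{L_f}^{n+1}|, where |φ_e'|_∞ = max(|φ_e'(1/M)|, |φ_e'(M)|). -/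
open Set Interval

theorem Real.abs_log_sub_log_le_div {a b c : ℝ} (hc : 0 < c) (ha : c ≤ a) (hb : c ≤ b) :
    |Real.log a - Real.log b| ≤ |a - b| / c := by
  wlog hba : b ≤ a generalizing a b
  · rw [abs_sub_comm, abs_sub_comm a]
    exact this hb ha (le_of_not_ge hba)
  have hb0 : 0 < b := hc.trans_le hb
  have hlog : Real.log a - Real.log b ≤ (a - b) / b := by
    rw [← Real.log_div (hb0.trans_le hba).ne' hb0.ne', sub_div, div_self hb0.ne']
    exact Real.log_le_sub_one_of_pos (div_pos (hb0.trans_le hba) hb0)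
  rw [abs_of_nonneg (sub_nonneg.2 (Real.log_le_log hb0 hba)), abs_of_nonneg (sub_nonneg.2 hba)]
  exact hlog.trans (div_le_div_of_nonneg_left (sub_nonneg.2 hba) hc hb)

lemma abs_phiE'_eq (γ z : ℝ) : |phiE' γ z| = |γ - 1|⁻¹ * |z|⁻¹ := by
  rw [phiE', neg_div, abs_neg, one_div, abs_inv, abs_mul, mul_inv]

lemma abs_phiE'_le {γ c z : ℝ} (hc : 0 < c) (hz : c ≤ z) : |phiE' γ z| ≤ |phiE' γ c| := by
  rw [abs_phiE'_eq, abs_phiE'_eq, abs_of_pos hc, abs_of_pos (hc.trans_le hz)]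
  exact mul_le_mul_of_nonneg_left (inv_anti₀ hc hz) (by positivity)

lemma abs_phiE_sub_le {γ a b c : ℝ} (hc : 0 < c) (ha : c ≤ a) (hb : c ≤ b) :
    |phiE γ a - phiE γ b| ≤ |phiE' γ c| * |a - b| := by
  have hsub : phiE γ a - phiE γ b = -(Real.log a - Real.log b) / (γ - 1) := by
    rw [phiE, phiE]; ring
  rw [hsub, abs_div, abs_neg, abs_phiE'_eq, abs_of_pos hc, div_eq_inv_mul]
  calc |γ - 1|⁻¹ * |Real.log a - Real.log b| ≤ |γ - 1|⁻¹ * (|a - b| / c) :=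
        mul_le_mul_of_nonneg_left (Real.abs_log_sub_log_le_div hc ha hb) (by positivity)
    _ = |γ - 1|⁻¹ * c⁻¹ * |a - b| := by ring

lemma abs_dphi_le {φ φ' : ℝ → ℝ} {L xK xL xKL xσ : ℝ}
    (hφ : ∀ x ∈ [[xK, xL]], ∀ y ∈ [[xK, xL]], |φ x - φ y| ≤ L * |x - y|)
    (hK : |φ' xK| ≤ L) (hL : |φ' xL| ≤ L) (hKL : xKL ∈ [[xK, xL]]) (hσ : xσ ∈ [[xK, xL]]) :
    |dphi φ φ' xK xL xKL xσ| ≤ 3 * L * |xK - xL| := by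
  have hL0 : 0 ≤ L := (abs_nonneg _).trans hK
  have dist_le {x y : ℝ} (hx : x ∈ [[xK, xL]]) (hy : y ∈ [[xK, xL]]) : |x - y| ≤ |xK - xL| := by
    rw [abs_sub_comm xK]
    exact abs_sub_le_of_uIcc_subset_uIcc (uIcc_subset_uIcc hy hx)
  have t₁ : |φ xK - φ xσ| ≤ L * |xK - xL| :=
    (hφ _ left_mem_uIcc _ hσ).trans
      (mul_le_mul_of_nonneg_left (dist_le left_mem_uIcc hσ) hL0)
  have t₂ : |φ' xK * (xKL - xK)| ≤ L * |xK - xL| := by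
    rw [abs_mul]
    exact mul_le_mul hK (dist_le hKL left_mem_uIcc) (abs_nonneg _) hL0
  have t₃ : |1 / 2 * (φ' xK + φ' xL) * (xσ - xKL)| ≤ L * |xK - xL| := by
    have hmean : |1 / 2 * (φ' xK + φ' xL)| ≤ L := by
      rw [abs_mul, abs_of_pos one_half_pos]
      linarith [abs_add_le (φ' xK) (φ' xL)]
    rw [abs_mul]
    exact mul_le_mul hmean (dist_le hσ hKL) (abs_nonneg _) hL0
  calc |dphi φ φ' xK xL xKL xσ|
      ≤ |φ xK - φ xσ| + |φ' xK * (xKL - xK)| + |1 / 2 * (φ' xK + φ' xL) * (xσ - xKL)| :=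
        (abs_add_le _ _).trans (add_le_add_left (abs_add_le _ _) _)
    _ ≤ 3 * L * |xK - xL| := by linarith

lemma abs_dphi_phiE_le {γ c xK xL xKL xσ : ℝ} (hc : 0 < c) (hK : c ≤ xK) (hL : c ≤ xL)
    (hKL : xKL ∈ [[xK, xL]]) (hσ : xσ ∈ [[xK, xL]]) :
    |dphi (phiE γ) (phiE' γ) xK xL xKL xσ| ≤ 3 * |phiE' γ c| * |xK - xL| := by
  have hc_le : ∀ x ∈ [[xK, xL]], c ≤ x := fun x hx => (le_min hK hL).trans hx.1
  exact abs_dphi_le (fun x hx y hy => abs_phiE_sub_le hc (hc_le x hx) (hc_le y hy))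
    (abs_phiE'_le hc hK) (abs_phiE'_le hc hL) hKL hσ

lemma sum_cellFaces_orientedVel_mul {Cell Face : Type*} [Fintype Cell] [Fintype Face]
    [DecidableEq Cell] (Kf Lf : Face → Cell) (hKL : ∀ f, Kf f ≠ Lf f) (u g : Face → ℝ)
    (ψ : Cell → ℝ) :
    ∑ Kc : Cell, (∑ f ∈ cellFaces Kf Lf Kc, g f * orientedVel Kf u Kc f) * ψ Kc
      = ∑ f : Face, g f * u f * (ψ (Kf f) - ψ (Lf f)) := by
  simp_rw [Finset.sum_mul, cellFaces, Finset.sum_filter]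
  rw [Finset.sum_comm]
  refine Finset.sum_congr rfl fun f _ => ?_
  rw [← Finset.sum_filter]
  have hcells : Finset.univ.filter (fun Kc => Kf f = Kc ∨ Lf f = Kc) = {Kf f, Lf f} := by
    ext Kc
    simp [eq_comm]
  rw [hcells, Finset.sum_pair (hKL f)]
  simp only [orientedVel, if_neg (hKL f), ↓reduceIte]
  ring

lemma abs_sum_dphi_flux_mul_le {Cell Face : Type*} [Fintype Cell] [Fintype Face]
    [DecidableEq Cell] {γ M B c L : ℝ} {Kf Lf : Face → Cell} {area u ρ eKL ef : Face → ℝ}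
    {e ψ : Cell → ℝ} (hc : 0 < c) (hL : |phiE' γ c| ≤ L) (hKL : ∀ f, Kf f ≠ Lf f)
    (harea : ∀ f, 0 < area f) (hu : ∀ f, |u f| ≤ M) (hρ : ∀ f, ρ f ∈ Ioc 0 M)
    (he : ∀ Kc, c ≤ e Kc)
    (hKLmem : ∀ f, eKL f ∈ [[e (Kf f), e (Lf f)]])
    (hface₁ : ∀ f, 0 ≤ u f → ef f ∈ [[e (Kf f), eKL f]])
    (hface₂ : ∀ f, u f < 0 → ef f ∈ [[e (Lf f), eKL f]])
    (hψ : ∀ f, |ψ (Kf f) - ψ (Lf f)| ≤ B) :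
    |∑ Kc : Cell, (∑ f ∈ cellFaces Kf Lf Kc,
        dphi (phiE γ) (phiE' γ) (e (Kf f)) (e (Lf f)) (eKL f) (ef f) *
          (area f * ρ f * orientedVel Kf u Kc f)) * ψ Kc|
      ≤ 3 * M ^ 2 * L * B * ∑ f : Face, area f * |e (Kf f) - e (Lf f)| := by
  simp_rw [← mul_assoc, sum_cellFaces_orientedVel_mul Kf Lf hKL, Finset.mul_sum]
  refine (Finset.abs_sum_le_sum_abs _ _).trans (Finset.sum_le_sum fun f _ => ?_)
  have hσ : ef f ∈ [[e (Kf f), e (Lf f)]] := by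
    rcases le_or_gt 0 (u f) with hu₀ | hu₀
    · exact uIcc_subset_uIcc left_mem_uIcc (hKLmem f) (hface₁ f hu₀)
    · exact uIcc_subset_uIcc right_mem_uIcc (hKLmem f) (hface₂ f hu₀)
  have hdphi : |dphi (phiE γ) (phiE' γ) (e (Kf f)) (e (Lf f)) (eKL f) (ef f)|
      ≤ 3 * L * |e (Kf f) - e (Lf f)| :=
    (abs_dphi_phiE_le hc (he (Kf f)) (he (Lf f)) (hKLmem f) hσ).trans (by gcongr)
  have hρ₀ := (hρ f).1.le
  have hρM := (hρ f).2
  have huM := hu f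
  have hψB := hψ f
  have harea₀ := (harea f).le
  have hL₀ : 0 ≤ L := (abs_nonneg _).trans hL
  have hM₀ : 0 ≤ M := (abs_nonneg _).trans huM
  rw [abs_mul, abs_mul, abs_mul, abs_mul, abs_of_nonneg harea₀, abs_of_nonneg hρ₀]
  calc _ ≤ 3 * L * |e (Kf f) - e (Lf f)| * area f * M * M * B := by bound
    _ = _ := by ring

theorem weak_estimate_energy_remainder_general
    (γ M : ℝ) (hM : 1 < M)
    (Cell Face : Type*) [Fintype Cell] [Fintype Face] [DecidableEq Cell]
    (Kf Lf : Face → Cell) (hKL : ∀ f, Kf f ≠ Lf f)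
    (area : Face → ℝ) (harea : ∀ f, 0 < area f)
    (N : ℕ) (δt : ℝ) (hδt : 0 < δt)
    (uf : Face → ℕ → ℝ) (hu : ∀ f n, n ≤ N → |uf f n| ≤ M)
    (ρf : Face → ℕ → ℝ) (hρf : ∀ f n, n ≤ N → ρf f n ∈ Set.Ioc 0 M)
    (e : Cell → ℕ → ℝ) (he : ∀ Kc n, n ≤ N → e Kc n ∈ Set.Icc (1 / M) M)
    (eKL ef : Face → ℕ → ℝ)
    (hKLmem : ∀ f n, 1 ≤ n → n ≤ N → eKL f n ∈ Set.uIcc (e (Kf f) n) (e (Lf f) n))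
    (hface₁ : ∀ f n, 1 ≤ n → n ≤ N → 0 ≤ uf f n →
      ef f n ∈ Set.uIcc (e (Kf f) n) (eKL f n))
    (hface₂ : ∀ f n, 1 ≤ n → n ≤ N → uf f n < 0 →
      ef f n ∈ Set.uIcc (e (Lf f) n) (eKL f n))
    (h G : ℝ)
    (ψ : Cell → ℕ → ℝ)
    (hψ : ∀ f n, n ≤ N → |ψ (Kf f) n - ψ (Lf f) n| ≤ G * h) :
    |∑ n ∈ Finset.range N, δt * ∑ Kc : Cell,
        (∑ f ∈ cellFaces Kf Lf Kc,
          dphi (phiE γ) (phiE' γ) (e (Kf f) (n + 1)) (e (Lf f) (n + 1))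
              (eKL f (n + 1)) (ef f (n + 1)) *
            (area f * ρf f (n + 1) * orientedVel Kf (fun f' => uf f' (n + 1)) Kc f)) *
          ψ Kc (n + 1)|
      ≤ 3 * M ^ 2 * max |phiE' γ (1 / M)| |phiE' γ M| * G * h *
          ∑ n ∈ Finset.range N, δt * ∑ f : Face,
            area f * |e (Kf f) (n + 1) - e (Lf f) (n + 1)| := by
  have hM0 : 0 < M := one_pos.trans hM
  rw [Finset.mul_sum]
  refine (Finset.abs_sum_le_sum_abs _ _).trans (Finset.sum_le_sum fun n hn => ?_)
  have hnN : n + 1 ≤ N := Finset.mem_range.mp hn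
  rw [abs_mul, abs_of_pos hδt, mul_left_comm]
  gcongr
  refine (abs_sum_dphi_flux_mul_le (one_div_pos.2 hM0) (le_max_left _ _) hKL harea
    (fun f => hu f (n + 1) hnN) (fun f => hρf f (n + 1) hnN) (fun Kc => (he Kc (n + 1) hnN).1)
    (fun f => hKLmem f (n + 1) n.succ_pos hnN) (fun f => hface₁ f (n + 1) n.succ_pos hnN)
    (fun f => hface₂ f (n + 1) n.succ_pos hnN) (fun f => hψ f (n + 1) hnN)).trans_eq (by ring)

/-- Weak (dual-norm) estimate on the conservative remainder `δR_e` of the renormalized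
internal energy balance for the reduced-diffusion scheme (Lemma 2.11). -/
theorem weak_estimate_energy_remainder
    (γ M : ℝ) (hγ : 1 < γ) (hM : 1 < M)
    (Cell Face : Type*) [Fintype Cell] [Fintype Face] [DecidableEq Cell]
    (Kf Lf : Face → Cell) (hKL : ∀ f, Kf f ≠ Lf f)
    (area : Face → ℝ) (harea : ∀ f, 0 < area f)
    (measK : Cell → ℝ) (hmeas : ∀ Kc, 0 < measK Kc)
    (N : ℕ) (δt : ℝ) (hδt : 0 < δt)
    (uf : Face → ℕ → ℝ) (hu : ∀ f n, n ≤ N → |uf f n| ≤ M)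
    (ρf : Face → ℕ → ℝ) (hρf : ∀ f n, n ≤ N → ρf f n ∈ Set.Ioc 0 M)
    (e : Cell → ℕ → ℝ) (he : ∀ Kc n, n ≤ N → e Kc n ∈ Set.Icc (1 / M) M)
    (eKL ef : Face → ℕ → ℝ)
    (hKLmem : ∀ f n, 1 ≤ n → n ≤ N → eKL f n ∈ Set.uIcc (e (Kf f) n) (e (Lf f) n))
    (hKLtan : ∀ f n, 1 ≤ n → n ≤ N → e (Kf f) n ≠ e (Lf f) n →
      phiE γ (e (Kf f) n) + phiE' γ (e (Kf f) n) * (eKL f n - e (Kf f) n)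
        = phiE γ (e (Lf f) n) + phiE' γ (e (Lf f) n) * (eKL f n - e (Lf f) n))
    (hKLeq : ∀ f n, 1 ≤ n → n ≤ N → e (Kf f) n = e (Lf f) n → eKL f n = e (Kf f) n)
    (hface₁ : ∀ f n, 1 ≤ n → n ≤ N → 0 ≤ uf f n →
      ef f n ∈ Set.uIcc (e (Kf f) n) (eKL f n))
    (hface₂ : ∀ f n, 1 ≤ n → n ≤ N → uf f n < 0 →
      ef f n ∈ Set.uIcc (e (Lf f) n) (eKL f n))
    (h G : ℝ) (hh : 0 < h) (hG : 0 ≤ G)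
    (ψ : Cell → ℕ → ℝ)
    (hψ : ∀ f n, n ≤ N → |ψ (Kf f) n - ψ (Lf f) n| ≤ G * h) :
    |∑ n ∈ Finset.range N, δt * ∑ Kc : Cell,
        (∑ f ∈ cellFaces Kf Lf Kc,
          dphi (phiE γ) (phiE' γ) (e (Kf f) (n + 1)) (e (Lf f) (n + 1))
              (eKL f (n + 1)) (ef f (n + 1)) *
            (area f * ρf f (n + 1) * orientedVel Kf (fun f' => uf f' (n + 1)) Kc f)) *
          ψ Kc (n + 1)|
      ≤ 3 * M ^ 2 * max |phiE' γ (1 / M)| |phiE' γ M| * G * h *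
          ∑ n ∈ Finset.range N, δt * ∑ f : Face,
            area f * |e (Kf f) (n + 1) - e (Lf f) (n + 1)| :=
  weak_estimate_energy_remainder_general γ M hM Cell Face Kf Lf hKL area harea N δt hδt uf hu ρf hρf
    e he eKL ef hKLmem hface₁ hface₂ h G ψ hψ
end

section
/- Let γ>1 and consider discrete mesh data for one time step n→n+1. For each cell K let ρ_K^{n}, ρ_K^{n+1}, e_K^{n}, e_K^{n+1} > 0, and for each internal face f let ρ_f^{n+1} > 0 and e_f^{n+1} > 0; set F_{K,f}^{n+1} = |σ_f|·ρ_f^{n+1}·u_{K,f}^{n+1} and p_K^{n+1} = (γ−1)·ρ_K^{n+1}·e_K^{n+1}. Assume: (i) for each cell K the mass balance (|K|/δt)(ρ_K^{n+1}−ρ_K^{n}) + Σ_{f∈E(K)} F_{K,f}^{n+1} = 0; (ii) for each cell K the internal energy inequality (|K|/δt)(ρ_K^{n+1}e_K^{n+1}−ρ_K^{n}e_K^{n}) + Σ_{f∈E(K)} F_{K,f}^{n+1}·e_f^{n+1} + p_K^{n+1}·Σ_{f∈E(K)} |σ_f|·u_{K,f}^{n+1} ≥ 0; (iii) for each face f,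 ρ_f^{n+1} ∈ [[ρ_{K_f}^{n+1}, ρ_{KL,f}^{n+1}]] if u_f^{n+1} ≥ 0 and ρ_f^{n+1} ∈ [[ρ_{L_f}^{n+1}, ρ_{KL,f}^{n+1}]] otherwise, where ρ_{KL,f}^{n+1} is the tangent-intersection point of φ_ρ at ρ_{K_f}^{n+1} and ρ_{L_f}^{n+1}; (iv) the analogous condition for e_f^{n+1} with the tangent-intersection point e_{KL,f}^{n+1} of φ_e at e_{K_f}^{n+1} and e_{L_f}^{n+1}. Then, with η_K^{m} = φ_ρ(ρ_K^{m}) + ρ_K^{m}·φ_e(e_K^{m}), the global entropy estimate Σ_{K∈C} |K|·η_K^{n+1} ≤ Σ_{K∈C} |K|·η_K^{n} holds. -/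
/-!
Write `T_x` for the tangent line at `x`. Convexity of `φ_ρ` and `φ_e`, combined with the mass
and internal-energy balances, bounds the entropy change of a cell by a sum of face fluxes
`-|σ| u_{K,f} (T_{ρ_K}(ρ_f) + ρ_f T_{e_K}(e_f))`; the pressure work cancels because
`φ_e'(e) (γ - 1) ρ e = -ρ` and `z φ_ρ'(z) - φ_ρ(z) = z`. The two fluxes through a face add up to
`-|σ| u_f` times the difference of the tangent expressions of its upwind and downwind cells, and
the limitation assumptions put `ρ_f`, `e_f` between the upwind value and the tangent
intersection point, where the upwind tangent is the larger one. So every face contributes a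
nonpositive amount.
-/

open Finset

def tangentLine (φ φ' : ℝ → ℝ) (x y : ℝ) : ℝ := φ x + φ' x * (y - x)

noncomputable def entropy (γ ρ e : ℝ) : ℝ := phiRho ρ + ρ * phiE γ e

/-- The entropy flux of cell `K` through a face is `-|σ| u_{K,f}` times this, evaluated at
the face values `ρ_f, e_f`. -/
noncomputable def tangentEntropy (γ ρK eK ρ e : ℝ) : ℝ :=
  tangentLine phiRho phiRho' ρK ρ + ρ * tangentLine (phiE γ) (phiE' γ) eK e

lemma mul_add_nonneg_of_mem_uIcc {m c a b y : ℝ} (ha : 0 ≤ m * a + c) (hb : 0 ≤ m * b + c)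
    (hy : y ∈ Set.uIcc a b) : 0 ≤ m * y + c := by
  rcases Set.mem_uIcc.1 hy with ⟨h1, h2⟩ | ⟨h1, h2⟩ <;> rcases le_or_gt 0 m with hm | hm
  · nlinarith [mul_le_mul_of_nonneg_left h1 hm]
  · nlinarith [mul_le_mul_of_nonpos_left h2 hm.le]
  · nlinarith [mul_le_mul_of_nonneg_left h1 hm]
  · nlinarith [mul_le_mul_of_nonpos_left h2 hm.le]

/-- The difference of the two tangents is affine, nonnegative at `xK` by convexity and zero
at `xKL`. -/
lemma tangentLine_le_tangentLine_of_mem_uIcc {φ φ' : ℝ → ℝ} {xK xL xKL y : ℝ}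
    (hconv : tangentLine φ φ' xL xK ≤ φ xK)
    (hKL : xK ≠ xL → tangentLine φ φ' xK xKL = tangentLine φ φ' xL xKL)
    (hy : y ∈ Set.uIcc xK xKL) :
    tangentLine φ φ' xL y ≤ tangentLine φ φ' xK y := by
  obtain rfl | hne := eq_or_ne xK xL
  · rfl
  have hKL := hKL hne
  unfold tangentLine at *
  have key : 0 ≤ (φ' xK - φ' xL) * y + ((φ xK - φ' xK * xK) - (φ xL - φ' xL * xL)) :=
    mul_add_nonneg_of_mem_uIcc (by linarith) (by linarith) hy
  linarith

lemma tangentLine_phiRho_le {a b : ℝ} (ha : 0 < a) (hb : 0 < b) :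
    tangentLine phiRho phiRho' b a ≤ phiRho a := by
  have h := Real.log_le_sub_one_of_pos (div_pos hb ha)
  rw [Real.log_div hb.ne' ha.ne', le_sub_iff_add_le, le_div_iff₀ ha] at h
  simp only [tangentLine, phiRho, phiRho']
  linarith

lemma tangentLine_phiE_le {γ a b : ℝ} (hγ : 1 < γ) (ha : 0 < a) (hb : 0 < b) :
    tangentLine (phiE γ) (phiE' γ) b a ≤ phiE γ a := by
  have h := Real.log_le_sub_one_of_pos (div_pos ha hb)
  rw [Real.log_div ha.ne' hb.ne'] at h
  have hlin : phiE' γ b * (a - b) = -(a / b - 1) / (γ - 1) := by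
    simp only [phiE']
    field_simp
  simp only [tangentLine, phiE, hlin, ← add_div]
  gcongr
  linarith

lemma tangentLine_phiRho (x y : ℝ) : tangentLine phiRho phiRho' x y = phiRho' x * y - x := by
  simp only [tangentLine, phiRho, phiRho']
  ring

lemma phiE'_nonpos {γ e : ℝ} (hγ : 1 < γ) (he : 0 < e) : phiE' γ e ≤ 0 :=
  div_nonpos_of_nonpos_of_nonneg (by norm_num) (mul_pos (by linarith) he).le

lemma phiE'_mul_pressure {γ e : ℝ} (ρ : ℝ) (hγ : 1 < γ) (he : 0 < e) :
    phiE' γ e * ((γ - 1) * ρ * e) = -ρ := by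
  have : (γ - 1) * e ≠ 0 := (mul_pos (by linarith) he).ne'
  simp only [phiE']
  rw [div_mul_eq_mul_div, div_eq_iff this]
  ring

lemma entropy_sub_le {γ ρ0 ρ1 e0 e1 : ℝ} (hγ : 1 < γ) (hρ0 : 0 < ρ0) (hρ1 : 0 < ρ1)
    (he0 : 0 < e0) (he1 : 0 < e1) :
    entropy γ ρ1 e1 - entropy γ ρ0 e0 ≤
      (phiRho' ρ1 + phiE γ e1 - e1 * phiE' γ e1) * (ρ1 - ρ0)
        + phiE' γ e1 * (ρ1 * e1 - ρ0 * e0) := by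
  have hρ := tangentLine_phiRho_le hρ0 hρ1
  have he := mul_le_mul_of_nonneg_left (tangentLine_phiE_le hγ he0 he1) hρ0.le
  unfold tangentLine at hρ he
  unfold entropy
  linarith

/-- `m = |K|/δt`; `SF`, `SFe`, `Su` stand for the sums over the faces of the cell of
`F_{K,f}`, `F_{K,f} e_f` and `|σ_f| u_{K,f}`. -/
lemma mul_entropy_sub_le {γ m ρ0 ρ1 e0 e1 SF SFe Su : ℝ} (hγ : 1 < γ) (hm : 0 ≤ m)
    (hρ0 : 0 < ρ0) (hρ1 : 0 < ρ1) (he0 : 0 < e0) (he1 : 0 < e1)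
    (hmass : m * (ρ1 - ρ0) + SF = 0)
    (henergy : 0 ≤ m * (ρ1 * e1 - ρ0 * e0) + SFe + (γ - 1) * ρ1 * e1 * Su) :
    m * (entropy γ ρ1 e1 - entropy γ ρ0 e0) ≤
      -(phiRho' ρ1 + phiE γ e1 - e1 * phiE' γ e1) * SF - phiE' γ e1 * SFe + ρ1 * Su := by
  have hE := mul_le_mul_of_nonpos_left
    (show m * (ρ1 * e1 - ρ0 * e0) ≥ -SFe - (γ - 1) * ρ1 * e1 * Su by linarith)
    (phiE'_nonpos hγ he1)
  have hp : phiE' γ e1 * ((γ - 1) * ρ1 * e1) * Su = -ρ1 * Su := by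
    rw [phiE'_mul_pressure ρ1 hγ he1]
  calc m * (entropy γ ρ1 e1 - entropy γ ρ0 e0)
      ≤ m * ((phiRho' ρ1 + phiE γ e1 - e1 * phiE' γ e1) * (ρ1 - ρ0)
          + phiE' γ e1 * (ρ1 * e1 - ρ0 * e0)) :=
        mul_le_mul_of_nonneg_left (entropy_sub_le hγ hρ0 hρ1 he0 he1) hm
    _ = (phiRho' ρ1 + phiE γ e1 - e1 * phiE' γ e1) * (m * (ρ1 - ρ0))
          + phiE' γ e1 * (m * (ρ1 * e1 - ρ0 * e0)) := by ring
    _ ≤ _ := by rw [show m * (ρ1 - ρ0) = -SF by linarith]; linarith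

lemma sum_neg_mul_tangentEntropy {ι : Type*} (s : Finset ι) (γ ρK eK : ℝ)
    (a u ρ e : ι → ℝ) :
    ∑ i ∈ s, -(a i * u i) * tangentEntropy γ ρK eK (ρ i) (e i) =
      -(phiRho' ρK + phiE γ eK - eK * phiE' γ eK) * ∑ i ∈ s, a i * ρ i * u i
        - phiE' γ eK * ∑ i ∈ s, a i * ρ i * u i * e i + ρK * ∑ i ∈ s, a i * u i := by
  simp only [mul_sum, ← sum_sub_distrib, ← sum_add_distrib]
  refine sum_congr rfl fun i _ => ?_
  rw [tangentEntropy, tangentLine_phiRho, tangentLine]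
  ring

lemma tangentEntropy_le_of_mem_uIcc {γ ρK ρL ρKL ρ eK eL eKL e : ℝ} (hγ : 1 < γ)
    (hρK : 0 < ρK) (hρL : 0 < ρL) (heK : 0 < eK) (heL : 0 < eL) (hρ : 0 < ρ)
    (hρtan : ρK ≠ ρL → tangentLine phiRho phiRho' ρK ρKL = tangentLine phiRho phiRho' ρL ρKL)
    (hetan : eK ≠ eL →
      tangentLine (phiE γ) (phiE' γ) eK eKL = tangentLine (phiE γ) (phiE' γ) eL eKL)
    (hρmem : ρ ∈ Set.uIcc ρK ρKL) (hemem : e ∈ Set.uIcc eK eKL) :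
    tangentEntropy γ ρL eL ρ e ≤ tangentEntropy γ ρK eK ρ e :=
  add_le_add
    (tangentLine_le_tangentLine_of_mem_uIcc (tangentLine_phiRho_le hρK hρL) hρtan hρmem)
    (mul_le_mul_of_nonneg_left
      (tangentLine_le_tangentLine_of_mem_uIcc (tangentLine_phiE_le hγ heK heL) hetan hemem)
      hρ.le)

lemma neg_mul_tangentEntropy_add_neg_mul_tangentEntropy_nonpos
    {γ a u ρK ρL ρKL ρ eK eL eKL e : ℝ} (hγ : 1 < γ) (ha : 0 ≤ a)
    (hρK : 0 < ρK) (hρL : 0 < ρL) (heK : 0 < eK) (heL : 0 < eL) (hρ : 0 < ρ)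
    (hρtan : ρK ≠ ρL → tangentLine phiRho phiRho' ρK ρKL = tangentLine phiRho phiRho' ρL ρKL)
    (hetan : eK ≠ eL →
      tangentLine (phiE γ) (phiE' γ) eK eKL = tangentLine (phiE γ) (phiE' γ) eL eKL)
    (hρK_mem : 0 ≤ u → ρ ∈ Set.uIcc ρK ρKL) (hρL_mem : u < 0 → ρ ∈ Set.uIcc ρL ρKL)
    (heK_mem : 0 ≤ u → e ∈ Set.uIcc eK eKL) (heL_mem : u < 0 → e ∈ Set.uIcc eL eKL) :
    -(a * u) * tangentEntropy γ ρK eK ρ e + -(a * -u) * tangentEntropy γ ρL eL ρ e ≤ 0 := by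
  rw [show -(a * u) * tangentEntropy γ ρK eK ρ e + -(a * -u) * tangentEntropy γ ρL eL ρ e
      = -(a * (u * (tangentEntropy γ ρK eK ρ e - tangentEntropy γ ρL eL ρ e))) by ring,
    neg_nonpos]
  refine mul_nonneg ha ?_
  rcases le_or_gt 0 u with hu | hu
  · exact mul_nonneg hu <| sub_nonneg.2 <| tangentEntropy_le_of_mem_uIcc hγ hρK hρL heK heL hρ
      hρtan hetan (hρK_mem hu) (heK_mem hu)
  · exact mul_nonneg_of_nonpos_of_nonpos hu.le <| sub_nonpos.2 <|
      tangentEntropy_le_of_mem_uIcc hγ hρL hρK heL heK hρ (fun h => (hρtan (Ne.symm h)).symm)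
        (fun h => (hetan (Ne.symm h)).symm) (hρL_mem hu) (heL_mem hu)

lemma sum_sum_cellFaces {Cell Face : Type*} [Fintype Cell] [Fintype Face] [DecidableEq Cell]
    (Kf Lf : Face → Cell) (hKL : ∀ f, Kf f ≠ Lf f) (g : Cell → Face → ℝ) :
    ∑ Kc : Cell, ∑ f ∈ cellFaces Kf Lf Kc, g Kc f = ∑ f : Face, (g (Kf f) f + g (Lf f) f) := by
  rw [sum_comm' (s' := fun f => {Kf f, Lf f}) (t' := univ)]
  · exact sum_congr rfl fun f _ => sum_pair (hKL f)
  · intro Kc f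
    simp [cellFaces, eq_comm]

theorem implicit_reduced_diffusion_global_entropy_general
    (γ : ℝ) (hγ : 1 < γ)
    (Cell Face : Type*) [Fintype Cell] [Fintype Face] [DecidableEq Cell]
    (Kf Lf : Face → Cell) (hKL : ∀ f, Kf f ≠ Lf f)
    (area : Face → ℝ) (harea : ∀ f, 0 < area f)
    (measK : Cell → ℝ) (hmeas : ∀ Kc, 0 < measK Kc)
    (δt : ℝ) (hδt : 0 < δt)
    (uf : Face → ℝ)
    (ρ0 ρ1 e0 e1 : Cell → ℝ)
    (hρ0 : ∀ Kc, 0 < ρ0 Kc) (hρ1 : ∀ Kc, 0 < ρ1 Kc)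
    (he0 : ∀ Kc, 0 < e0 Kc) (he1 : ∀ Kc, 0 < e1 Kc)
    (ρf ef : Face → ℝ) (hρf : ∀ f, 0 < ρf f)
    (ρKL eKL : Face → ℝ)
    (hρKLtan : ∀ f, ρ1 (Kf f) ≠ ρ1 (Lf f) →
      phiRho (ρ1 (Kf f)) + phiRho' (ρ1 (Kf f)) * (ρKL f - ρ1 (Kf f))
        = phiRho (ρ1 (Lf f)) + phiRho' (ρ1 (Lf f)) * (ρKL f - ρ1 (Lf f)))
    (heKLtan : ∀ f, e1 (Kf f) ≠ e1 (Lf f) →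
      phiE γ (e1 (Kf f)) + phiE' γ (e1 (Kf f)) * (eKL f - e1 (Kf f))
        = phiE γ (e1 (Lf f)) + phiE' γ (e1 (Lf f)) * (eKL f - e1 (Lf f)))
    (hρface₁ : ∀ f, 0 ≤ uf f → ρf f ∈ Set.uIcc (ρ1 (Kf f)) (ρKL f))
    (hρface₂ : ∀ f, uf f < 0 → ρf f ∈ Set.uIcc (ρ1 (Lf f)) (ρKL f))
    (heface₁ : ∀ f, 0 ≤ uf f → ef f ∈ Set.uIcc (e1 (Kf f)) (eKL f))
    (heface₂ : ∀ f, uf f < 0 → ef f ∈ Set.uIcc (e1 (Lf f)) (eKL f))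
    (hmass : ∀ Kc, measK Kc / δt * (ρ1 Kc - ρ0 Kc)
        + ∑ f ∈ cellFaces Kf Lf Kc, area f * ρf f * orientedVel Kf uf Kc f = 0)
    (henergy : ∀ Kc, 0 ≤ measK Kc / δt * (ρ1 Kc * e1 Kc - ρ0 Kc * e0 Kc)
        + ∑ f ∈ cellFaces Kf Lf Kc, (area f * ρf f * orientedVel Kf uf Kc f) * ef f
        + ((γ - 1) * ρ1 Kc * e1 Kc) *
            ∑ f ∈ cellFaces Kf Lf Kc, area f * orientedVel Kf uf Kc f) :
    ∑ Kc : Cell, measK Kc * (phiRho (ρ1 Kc) + ρ1 Kc * phiE γ (e1 Kc))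
      ≤ ∑ Kc : Cell, measK Kc * (phiRho (ρ0 Kc) + ρ0 Kc * phiE γ (e0 Kc)) := by
  set flux : Cell → Face → ℝ := fun Kc f =>
    -(area f * orientedVel Kf uf Kc f) * tangentEntropy γ (ρ1 Kc) (e1 Kc) (ρf f) (ef f)
  have hcell (Kc : Cell) :
      measK Kc / δt * (entropy γ (ρ1 Kc) (e1 Kc) - entropy γ (ρ0 Kc) (e0 Kc))
        ≤ ∑ f ∈ cellFaces Kf Lf Kc, flux Kc f :=
    (mul_entropy_sub_le hγ (div_pos (hmeas Kc) hδt).le (hρ0 Kc) (hρ1 Kc) (he0 Kc) (he1 Kc)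
      (hmass Kc) (henergy Kc)).trans_eq (sum_neg_mul_tangentEntropy _ _ _ _ _ _ _ _).symm
  have hface (f : Face) : flux (Kf f) f + flux (Lf f) f ≤ 0 := by
    simp only [flux, orientedVel, if_neg (hKL f), ↓reduceIte]
    exact neg_mul_tangentEntropy_add_neg_mul_tangentEntropy_nonpos hγ (harea f).le (hρ1 _)
      (hρ1 _) (he1 _) (he1 _) (hρf f) (hρKLtan f) (heKLtan f) (hρface₁ f) (hρface₂ f)
      (heface₁ f) (heface₂ f)
  have htotal : ∑ Kc : Cell,
      measK Kc / δt * (entropy γ (ρ1 Kc) (e1 Kc) - entropy γ (ρ0 Kc) (e0 Kc)) ≤ 0 :=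
    calc _ ≤ ∑ Kc : Cell, ∑ f ∈ cellFaces Kf Lf Kc, flux Kc f := sum_le_sum fun Kc _ => hcell Kc
      _ = ∑ f : Face, (flux (Kf f) f + flux (Lf f) f) := sum_sum_cellFaces Kf Lf hKL flux
      _ ≤ 0 := sum_nonpos fun f _ => hface f
  have hrescale : ∑ Kc : Cell,
      measK Kc / δt * (entropy γ (ρ1 Kc) (e1 Kc) - entropy γ (ρ0 Kc) (e0 Kc)) =
      (∑ Kc : Cell, measK Kc * entropy γ (ρ1 Kc) (e1 Kc)
        - ∑ Kc : Cell, measK Kc * entropy γ (ρ0 Kc) (e0 Kc)) / δt := by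
    rw [← sum_sub_distrib, sum_div]
    exact sum_congr rfl fun _ _ => by ring
  rw [hrescale, div_le_iff₀ hδt, zero_mul, sub_nonpos] at htotal
  exact htotal

/-- Global entropy estimate for one time step of the implicit reduced-diffusion
scheme (Theorem 2.12): under the limitation assumptions `(H_ρ^imp)` and `(H_e^imp)`,
the total entropy `Σ_K |K| η_K` does not increase. -/
theorem implicit_reduced_diffusion_global_entropy
    (γ : ℝ) (hγ : 1 < γ)
    (Cell Face : Type*) [Fintype Cell] [Fintype Face] [DecidableEq Cell]
    (Kf Lf : Face → Cell) (hKL : ∀ f, Kf f ≠ Lf f)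
    (area : Face → ℝ) (harea : ∀ f, 0 < area f)
    (measK : Cell → ℝ) (hmeas : ∀ Kc, 0 < measK Kc)
    (δt : ℝ) (hδt : 0 < δt)
    (uf : Face → ℝ)
    (ρ0 ρ1 e0 e1 : Cell → ℝ)
    (hρ0 : ∀ Kc, 0 < ρ0 Kc) (hρ1 : ∀ Kc, 0 < ρ1 Kc)
    (he0 : ∀ Kc, 0 < e0 Kc) (he1 : ∀ Kc, 0 < e1 Kc)
    (ρf ef : Face → ℝ) (hρf : ∀ f, 0 < ρf f) (hef : ∀ f, 0 < ef f)
    (ρKL eKL : Face → ℝ)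
    (hρKLmem : ∀ f, ρKL f ∈ Set.uIcc (ρ1 (Kf f)) (ρ1 (Lf f)))
    (hρKLtan : ∀ f, ρ1 (Kf f) ≠ ρ1 (Lf f) →
      phiRho (ρ1 (Kf f)) + phiRho' (ρ1 (Kf f)) * (ρKL f - ρ1 (Kf f))
        = phiRho (ρ1 (Lf f)) + phiRho' (ρ1 (Lf f)) * (ρKL f - ρ1 (Lf f)))
    (hρKLeq : ∀ f, ρ1 (Kf f) = ρ1 (Lf f) → ρKL f = ρ1 (Kf f))
    (heKLmem : ∀ f, eKL f ∈ Set.uIcc (e1 (Kf f)) (e1 (Lf f)))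
    (heKLtan : ∀ f, e1 (Kf f) ≠ e1 (Lf f) →
      phiE γ (e1 (Kf f)) + phiE' γ (e1 (Kf f)) * (eKL f - e1 (Kf f))
        = phiE γ (e1 (Lf f)) + phiE' γ (e1 (Lf f)) * (eKL f - e1 (Lf f)))
    (heKLeq : ∀ f, e1 (Kf f) = e1 (Lf f) → eKL f = e1 (Kf f))
    (hρface₁ : ∀ f, 0 ≤ uf f → ρf f ∈ Set.uIcc (ρ1 (Kf f)) (ρKL f))
    (hρface₂ : ∀ f, uf f < 0 → ρf f ∈ Set.uIcc (ρ1 (Lf f)) (ρKL f))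
    (heface₁ : ∀ f, 0 ≤ uf f → ef f ∈ Set.uIcc (e1 (Kf f)) (eKL f))
    (heface₂ : ∀ f, uf f < 0 → ef f ∈ Set.uIcc (e1 (Lf f)) (eKL f))
    (hmass : ∀ Kc, measK Kc / δt * (ρ1 Kc - ρ0 Kc)
        + ∑ f ∈ cellFaces Kf Lf Kc, area f * ρf f * orientedVel Kf uf Kc f = 0)
    (henergy : ∀ Kc, 0 ≤ measK Kc / δt * (ρ1 Kc * e1 Kc - ρ0 Kc * e0 Kc)
        + ∑ f ∈ cellFaces Kf Lf Kc, (area f * ρf f * orientedVel Kf uf Kc f) * ef f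
        + ((γ - 1) * ρ1 Kc * e1 Kc) *
            ∑ f ∈ cellFaces Kf Lf Kc, area f * orientedVel Kf uf Kc f) :
    ∑ Kc : Cell, measK Kc * (phiRho (ρ1 Kc) + ρ1 Kc * phiE γ (e1 Kc))
      ≤ ∑ Kc : Cell, measK Kc * (phiRho (ρ0 Kc) + ρ0 Kc * phiE γ (e0 Kc)) :=
  implicit_reduced_diffusion_global_entropy_general γ hγ Cell Face Kf Lf hKL area harea measK hmeas
    δt hδt uf ρ0 ρ1 e0 e1 hρ0 hρ1 he0 he1 ρf ef hρf ρKL eKL hρKLtan heKLtan hρface₁ hρface₂ heface₁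
    heface₂ hmass henergy
end

section
/- Let M>1 and let φ be twice continuously differentiable on (0,∞); denote by |φ''|_∞ the maximum of |φ''| on [1/M, M]. Consider a finite set C of cells, each K∈C with measure |K|>0 and a finite face set E(K) with areas |σ|>0, and time levels n=0,…,N with constant time step δt>0. Suppose for all K, σ∈E(K) and n: ρ_K^{n} ∈ [1/M, M], ρ_σ^{n} ∈ (0, M], and |u_{K,σ}^{n}| ≤ M. Define, for each K and 0≤n≤N−1, |K|·R_K^{n+1} = (φ'(ρ_K^{n+1}) − φ'(ρ_K^{n}))·Σ_{σ∈E(K)} |σ|·ρ_σ^{n}·u_{K,σ}^{n}. Then Σ_{n=0}^{N−1} δt Σ_{K∈C} |K|·|R_K^{n+1}| ≤ M²·|φ''|_∞·(Σ_{n=0}^{N−1} Σ_{K∈C} |K|·|ρ_K^{n+1}−ρ_K^{n}|)·(δt / h̲), where h̲ = min_{K∈C} |K| / (Σ_{σ∈E(K)} |σ|). -/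
/-!
On `[1/M, M]` the function `φ'` is `|φ''|_∞`-Lipschitz, so `|φ'(ρ_K^{n+1}) - φ'(ρ_K^n)|` is at most
`|φ''|_∞ |ρ_K^{n+1} - ρ_K^n|`. Each flux term `|σ| ρ_σ^n u_{K,σ}^n` is at most `M² |σ|`, and
`Σ_{σ ∈ E(K)} |σ| ≤ |K| / h̲` by the definition of `h̲`. Multiplying and summing over `K` and `n`
gives the bound.
-/

open Finset

theorem abs_deriv_sub_le_of_contDiffOn_two {φ : ℝ → ℝ} {s t : Set ℝ} (hs : IsOpen s)
    (hφ : ContDiffOn ℝ 2 φ s) (ht : Convex ℝ t) (hts : t ⊆ s) {C : ℝ}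
    (hC : ∀ x ∈ t, |deriv (deriv φ) x| ≤ C) {x y : ℝ} (hx : x ∈ t) (hy : y ∈ t) :
    |deriv φ y - deriv φ x| ≤ C * |y - x| := by
  have hφ' : ContDiffOn ℝ 1 (deriv φ) s := hφ.deriv_of_isOpen hs (by norm_num)
  have hdiff : ∀ z ∈ t, DifferentiableAt ℝ (deriv φ) z := fun z hz =>
    (hφ'.differentiableOn one_ne_zero).differentiableAt (hs.mem_nhds (hts hz))
  simpa only [Real.norm_eq_abs] using ht.norm_image_sub_le_of_norm_deriv_le hdiff hC hx hy

theorem abs_sum_mul_mul_le_sq_mul_sum {ι : Type*} (s : Finset ι) {a r u : ι → ℝ} {M : ℝ}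
    (ha : ∀ i ∈ s, 0 ≤ a i) (hr : ∀ i ∈ s, r i ∈ Set.Icc 0 M) (hu : ∀ i ∈ s, |u i| ≤ M) :
    |∑ i ∈ s, a i * r i * u i| ≤ M ^ 2 * ∑ i ∈ s, a i := by
  rw [mul_sum]
  refine (abs_sum_le_sum_abs _ _).trans (sum_le_sum fun i hi => ?_)
  obtain ⟨hr0, hrM⟩ := hr i hi
  have ha' := ha i hi
  rw [abs_mul, abs_mul, abs_of_nonneg ha', abs_of_nonneg hr0, sq, mul_comm (M * M), ← mul_assoc]
  exact mul_le_mul (mul_le_mul_of_nonneg_left hrM ha') (hu i hi) (abs_nonneg _)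
    (mul_nonneg ha' (hr0.trans hrM))

theorem le_div_inf'_div {ι : Type*} {s : Finset ι} (hs : s.Nonempty) {m A : ι → ℝ}
    (hinf : 0 < s.inf' hs (fun j => m j / A j)) {i : ι} (hi : i ∈ s) (hA : 0 < A i) :
    A i ≤ m i / s.inf' hs (fun j => m j / A j) := by
  rw [le_div_iff₀ hinf, ← le_div_iff₀' hA]
  exact inf'_le _ hi

theorem explicit_mass_time_remainder_bound_general
    (M : ℝ) (hM : 1 < M)
    (φ : ℝ → ℝ) (hφ : ContDiffOn ℝ 2 φ (Set.Ioi 0))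
    (C2 : ℝ) (hC2 : ∀ x ∈ Set.Icc (1 / M) M, |deriv (deriv φ) x| ≤ C2)
    (Cell Face : Type*) [Fintype Cell] [Nonempty Cell]
    (measK : Cell → ℝ) (hmeas : ∀ Kc, 0 < measK Kc)
    (E : Cell → Finset Face) (hE : ∀ Kc, (E Kc).Nonempty)
    (area : Face → ℝ) (harea : ∀ f, 0 < area f)
    (N : ℕ) (δt : ℝ) (hδt : 0 < δt)
    (ρ : Cell → ℕ → ℝ) (hρ : ∀ Kc n, n ≤ N → ρ Kc n ∈ Set.Icc (1 / M) M)
    (ρface : Face → ℕ → ℝ) (hρface : ∀ f n, n ≤ N → ρface f n ∈ Set.Ioc 0 M)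
    (uK : Cell → Face → ℕ → ℝ) (hu : ∀ Kc f n, n ≤ N → |uK Kc f n| ≤ M) :
    ∑ n ∈ Finset.range N, δt * ∑ Kc : Cell,
        |(deriv φ (ρ Kc (n + 1)) - deriv φ (ρ Kc n)) *
          ∑ f ∈ E Kc, area f * ρface f n * uK Kc f n|
      ≤ M ^ 2 * C2 * (∑ n ∈ Finset.range N, ∑ Kc : Cell, measK Kc * |ρ Kc (n + 1) - ρ Kc n|)
          * (δt / Finset.univ.inf' Finset.univ_nonempty
              (fun Kc => measK Kc / ∑ f ∈ E Kc, area f)) := by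
  set h := univ.inf' univ_nonempty fun Kc => measK Kc / ∑ f ∈ E Kc, area f
  have harea_sum (Kc : Cell) : 0 < ∑ f ∈ E Kc, area f := sum_pos (fun f _ => harea f) (hE Kc)
  have hh : 0 < h := (lt_inf'_iff _).2 fun Kc _ => div_pos (hmeas Kc) (harea_sum Kc)
  have hIcc_pos : Set.Icc (1 / M) M ⊆ Set.Ioi 0 := fun x hx =>
    lt_of_lt_of_le (by positivity) hx.1
  have hterm : ∀ n ∈ range N, ∀ Kc : Cell,
      |(deriv φ (ρ Kc (n + 1)) - deriv φ (ρ Kc n)) * ∑ f ∈ E Kc, area f * ρface f n * uK Kc f n|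
        ≤ M ^ 2 * C2 * (measK Kc * |ρ Kc (n + 1) - ρ Kc n|) / h := by
    intro n hn Kc
    have hn' : n + 1 ≤ N := mem_range.1 hn
    have hΔ := abs_deriv_sub_le_of_contDiffOn_two isOpen_Ioi hφ (convex_Icc _ _) hIcc_pos hC2
      (hρ Kc n (by omega)) (hρ Kc (n + 1) hn')
    have hflux := abs_sum_mul_mul_le_sq_mul_sum (E Kc) (fun f _ => (harea f).le)
      (fun f _ => Set.Ioc_subset_Icc_self (hρface f n (by omega))) fun f _ => hu Kc f n (by omega)
    have hfaces := le_div_inf'_div univ_nonempty hh (mem_univ Kc) (harea_sum Kc)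
    calc _ ≤ C2 * |ρ Kc (n + 1) - ρ Kc n| * (M ^ 2 * (measK Kc / h)) := by
          rw [abs_mul]
          exact mul_le_mul hΔ (hflux.trans (by gcongr)) (abs_nonneg _)
            ((abs_nonneg _).trans hΔ)
      _ = _ := by ring
  calc _ ≤ ∑ n ∈ range N, δt * ∑ Kc : Cell,
          M ^ 2 * C2 * (measK Kc * |ρ Kc (n + 1) - ρ Kc n|) / h := by
        gcongr with n hn Kc
        exact hterm n hn Kc
    _ = _ := by
        simp only [mul_sum, sum_mul]
        refine sum_congr rfl fun n _ => sum_congr rfl fun Kc _ => ?_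
        ring

/-- L¹ bound (Lemma 3.2) on the remainder of the explicit time discretization of the
renormalized mass balance: `‖R‖_{L¹} ≤ M² |φ''|_∞ |ρ|_{T,BV} (δt / h̲)`, where
`h̲ = min_K |K| / Σ_{σ∈E(K)} |σ|`. -/
theorem explicit_mass_time_remainder_bound
    (M : ℝ) (hM : 1 < M)
    (φ : ℝ → ℝ) (hφ : ContDiffOn ℝ 2 φ (Set.Ioi 0))
    (C2 : ℝ) (hC2 : ∀ x ∈ Set.Icc (1 / M) M, |deriv (deriv φ) x| ≤ C2)
    (Cell Face : Type*) [Fintype Cell] [Fintype Face] [Nonempty Cell]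
    (measK : Cell → ℝ) (hmeas : ∀ Kc, 0 < measK Kc)
    (E : Cell → Finset Face) (hE : ∀ Kc, (E Kc).Nonempty)
    (area : Face → ℝ) (harea : ∀ f, 0 < area f)
    (N : ℕ) (δt : ℝ) (hδt : 0 < δt)
    (ρ : Cell → ℕ → ℝ) (hρ : ∀ Kc n, n ≤ N → ρ Kc n ∈ Set.Icc (1 / M) M)
    (ρface : Face → ℕ → ℝ) (hρface : ∀ f n, n ≤ N → ρface f n ∈ Set.Ioc 0 M)
    (uK : Cell → Face → ℕ → ℝ) (hu : ∀ Kc f n, n ≤ N → |uK Kc f n| ≤ M) :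
    ∑ n ∈ Finset.range N, δt * ∑ Kc : Cell,
        |(deriv φ (ρ Kc (n + 1)) - deriv φ (ρ Kc n)) *
          ∑ f ∈ E Kc, area f * ρface f n * uK Kc f n|
      ≤ M ^ 2 * C2 * (∑ n ∈ Finset.range N, ∑ Kc : Cell, measK Kc * |ρ Kc (n + 1) - ρ Kc n|)
          * (δt / Finset.univ.inf' Finset.univ_nonempty
              (fun Kc => measK Kc / ∑ f ∈ E Kc, area f)) :=
  explicit_mass_time_remainder_bound_general M hM φ hφ C2 hC2 Cell Face measK hmeas E hE area harea
    N δt hδt ρ hρ ρface hρface uK hu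
end

section
/- Let d≥1, M>1, and let φ be twice continuously differentiable on (0,∞); denote by |φ''|_∞ the maximum of φ'' on [1/M, M]. Consider a finite set C of cells, each K∈C with measure |K|>0, a diameter parameter h_K>0, and a finite face set E(K) with areas |σ|>0 and unit normal vectors n_{K,σ}∈ℝ^d satisfying Σ_{σ∈E(K)} |σ|·n_{K,σ} = 0; let the number of faces of every cell be at most N_E. For time levels n=0,…,N with constant step δt>0, let face velocity vectors u_σ^{n}∈ℝ^d be given for σ∈E(K), set u_{K,σ}^{n} = u_σ^{n}·n_{K,σ}, and suppose ρ_K^{n} ∈ [1/M, M] for all K, n. For each K and 0≤n≤N−1 let ρ̃_K^{n+1/2} ∈ [[ρ_K^{n}, ρ_K^{n+1}]] and define |K|·(R_{01})_K^{n+1} = φ''(ρ̃_K^{n+1/2})·(ρ_K^{n+1}−ρ_K^{n})·ρ_K^{n}·Σ_{σ∈E(K)} |σ|·u_{K,σ}^{n}. Let 1<p<∞ and 1<q<∞ with 1/p + 1/q = 1. Then there exists a constant C depending only on d and N_E such that Σ_{n=0}^{N−1} δt Σ_{K∈C} |K|·|(R_{01})_K^{n+1}| ≤ C·C_M·M^{(2p−1)/p}·|φ''|_∞·(Σ_{n=0}^{N−1}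 Σ_{K} |K|·|ρ_K^{n+1}−ρ_K^{n}|)^{1/p}·‖u‖_{L^q(W^{1,q})}·δt^{1/p}, where C_M = max over K∈C and (σ,σ')∈E(K)² of (|σ|+|σ'|)·h_K/|K|, and ‖u‖_{L^q(W^{1,q})}^q = Σ_{i=1}^{d} Σ_{n=0}^{N} δt Σ_{K∈C} Σ_{(σ,σ')∈E(K)²} |K|·(|u_{σ,i}^{n}−u_{σ',i}^{n}|/h_K)^q. -/
/-!
Since `∑_σ |σ| n_{K,σ} = 0`, subtracting the velocity of one face `σ₀` of `K` from all face
velocities leaves the discrete divergence `∑_σ |σ| u_σ · n_{K,σ}` unchanged; with `|n_{K,σ}| ≤ 1`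
and `|σ| ≤ C_M |K| / h_K` it is therefore bounded by `C_M |K| ∑_{σ,σ'} |u_σ - u_σ'| / h_K`.
Together with `|φ''(ρ̃)| ≤ |φ''|_∞` and `ρ ≤ M` this bounds `‖R₀₁‖_{L¹}` by
`|φ''|_∞ M C_M ∑ δt |K| |ρ_K^{n+1} - ρ_K^n| |u_σ - u_σ'| / h_K`. Hölder's inequality with the
weights `δt |K| |ρ_K^{n+1} - ρ_K^n|`, and `|ρ_K^{n+1} - ρ_K^n| ≤ M` inside the `q`-factor, gives
the claim with the constant `d N_E² + 1 ≥ (d N_E²)^{1/p}`.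
-/

open Finset

theorem sum_mul_sum_le_rpow_mul_rpow {α β : Type*} (s : Finset α) (t : α → Finset β)
    {p q A B : ℝ} (hpq : p.HolderConjugate q) (ω : α → ℝ) (v : α → β → ℝ)
    (hω : ∀ a, 0 ≤ ω a) (hv : ∀ a b, 0 ≤ v a b) (hA : ∑ a ∈ s, #(t a) * ω a ≤ A)
    (hB : ∑ a ∈ s, ω a * ∑ b ∈ t a, v a b ^ q ≤ B) :
    ∑ a ∈ s, ω a * ∑ b ∈ t a, v a b ≤ A ^ (1 / p) * B ^ (1 / q) := by
  have hS₁ : 0 ≤ ∑ a ∈ s, #(t a) * ω a :=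
    sum_nonneg fun a _ => mul_nonneg (Nat.cast_nonneg _) (hω a)
  have hS₂ : 0 ≤ ∑ a ∈ s, ω a * ∑ b ∈ t a, v a b ^ q :=
    sum_nonneg fun a _ => mul_nonneg (hω a) (sum_nonneg fun b _ => Real.rpow_nonneg (hv a b) q)
  have holder := Real.inner_le_weight_mul_Lp_of_nonneg (s.sigma t) hpq.symm.lt.le
    (fun x => ω x.1) (fun x => v x.1 x.2) (fun x => hω x.1) (fun x => hv x.1 x.2)
  rw [hpq.symm.one_sub_inv] at holder
  simp only [sum_sigma, ← mul_sum, sum_const, nsmul_eq_mul, ← one_div] at holder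
  exact holder.trans (mul_le_mul (Real.rpow_le_rpow hS₁ hA hpq.one_div_nonneg)
    (Real.rpow_le_rpow hS₂ hB hpq.symm.one_div_nonneg) (Real.rpow_nonneg hS₂ _)
    (Real.rpow_nonneg (hS₁.trans hA) _))

theorem abs_le_one_of_sum_sq_eq_one {κ : Type*} [Fintype κ] {x : κ → ℝ}
    (hx : ∑ i, x i ^ 2 = 1) (i : κ) : |x i| ≤ 1 := by
  rw [← sq_le_one_iff_abs_le_one, ← hx]
  exact single_le_sum (fun j _ => sq_nonneg (x j)) (mem_univ i)

theorem sum_mul_dot_eq_sum_mul_sub_dot {ι κ : Type*} [Fintype κ] (s : Finset ι) (a : ι → ℝ)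
    (ν u : ι → κ → ℝ) (c : κ → ℝ) (hclosed : ∀ i, ∑ f ∈ s, a f * ν f i = 0) :
    ∑ f ∈ s, a f * ∑ i, u f i * ν f i = ∑ f ∈ s, a f * ∑ i, (u f i - c i) * ν f i := by
  have hconst : ∑ f ∈ s, a f * ∑ i, c i * ν f i = 0 := by
    simp_rw [mul_sum]
    rw [sum_comm]
    refine sum_eq_zero fun i _ => ?_
    simp_rw [mul_left_comm (a _), ← mul_sum, hclosed, mul_zero]
  simp only [sub_mul, sum_sub_distrib, mul_sub, hconst, sub_zero]

theorem abs_sum_mul_dot_le {ι κ : Type*} [Fintype κ] (s : Finset ι) (a : ι → ℝ)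
    (ν u : ι → κ → ℝ) (A : ℝ) (ha : ∀ f ∈ s, 0 ≤ a f ∧ a f ≤ A) (hν : ∀ f ∈ s, ∀ i, |ν f i| ≤ 1)
    (hclosed : ∀ i, ∑ f ∈ s, a f * ν f i = 0) :
    |∑ f ∈ s, a f * ∑ i, u f i * ν f i| ≤ A * ∑ i, ∑ f ∈ s, ∑ f' ∈ s, |u f i - u f' i| := by
  obtain rfl | ⟨f₀, hf₀⟩ := s.eq_empty_or_nonempty
  · simp
  have hA : 0 ≤ A := (ha f₀ hf₀).1.trans (ha f₀ hf₀).2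
  rw [sum_mul_dot_eq_sum_mul_sub_dot s a ν u (u f₀) hclosed]
  calc |∑ f ∈ s, a f * ∑ i, (u f i - u f₀ i) * ν f i|
      ≤ ∑ f ∈ s, A * ∑ i, |u f i - u f₀ i| := by
        refine (abs_sum_le_sum_abs _ _).trans (sum_le_sum fun f hf => ?_)
        rw [abs_mul, abs_of_nonneg (ha f hf).1]
        refine mul_le_mul (ha f hf).2 ((abs_sum_le_sum_abs _ _).trans (sum_le_sum fun i _ => ?_))
          (abs_nonneg _) hA
        rw [abs_mul]
        exact mul_le_of_le_one_right (abs_nonneg _) (hν f hf i)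
    _ = A * ∑ i, ∑ f ∈ s, |u f i - u f₀ i| := by rw [← mul_sum, sum_comm]
    _ ≤ A * ∑ i, ∑ f ∈ s, ∑ f' ∈ s, |u f i - u f' i| := by
        gcongr with i _ f _
        exact single_le_sum (f := fun f' => |u f i - u f' i|) (fun _ _ => abs_nonneg _) hf₀

theorem abs_remainder_cell_le {ι κ : Type*} [Fintype κ] (s : Finset ι) (area : ι → ℝ)
    (ν u : ι → κ → ℝ) {m h CM C2 M a b c : ℝ} (hm : 0 < m) (hh : 0 < h)
    (harea : ∀ f ∈ s, 0 ≤ area f) (hν : ∀ f ∈ s, ∑ i, ν f i ^ 2 = 1)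
    (hclosed : ∀ i, ∑ f ∈ s, area f * ν f i = 0)
    (hCM : ∀ f ∈ s, ∀ f' ∈ s, (area f + area f') * h / m ≤ CM) (ha : |a| ≤ C2) (hc : |c| ≤ M) :
    |a * b * c * ∑ f ∈ s, area f * ∑ i, u f i * ν f i| ≤
      C2 * M * CM * (m * |b| * ∑ x ∈ univ ×ˢ s ×ˢ s, |u x.2.1 x.1 - u x.2.2 x.1| / h) := by
  have harea_le : ∀ f ∈ s, 0 ≤ area f ∧ area f ≤ CM * m / h := by
    intro f hf
    refine ⟨harea f hf, ?_⟩
    have := hCM f hf f hf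
    rw [div_le_iff₀ hm] at this
    rw [le_div_iff₀ hh]
    nlinarith [mul_nonneg (harea f hf) hh.le]
  have hflux := abs_sum_mul_dot_le s area ν u _ harea_le
    (fun f hf => abs_le_one_of_sum_sq_eq_one (hν f hf)) hclosed
  have hC2 : 0 ≤ C2 := (abs_nonneg a).trans ha
  have hM : 0 ≤ M := (abs_nonneg c).trans hc
  rw [abs_mul, abs_mul, abs_mul]
  calc |a| * |b| * |c| * |∑ f ∈ s, area f * ∑ i, u f i * ν f i|
      ≤ C2 * |b| * M * (CM * m / h * ∑ i, ∑ f ∈ s, ∑ f' ∈ s, |u f i - u f' i|) := by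
        gcongr
    _ = C2 * M * CM * (m * |b| * ∑ x ∈ univ ×ˢ s ×ˢ s, |u x.2.1 x.1 - u x.2.2 x.1| / h) := by
        simp only [sum_product, ← sum_div]
        ring

theorem mul_rpow_mul_rpow_le_add_one {p q M X B W δt C2 CM : ℝ} (hpq : p.HolderConjugate q)
    (hM : 0 < M) (hX : 0 ≤ X) (hB : 0 ≤ B) (hW : 0 ≤ W) (hδt : 0 ≤ δt) (hC2 : 0 ≤ C2)
    (hCM : 0 ≤ CM) :
    C2 * M * CM * ((X * (δt * B)) ^ (1 / p) * (M * W) ^ (1 / q)) ≤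
      (X + 1) * CM * M ^ ((2 * p - 1) / p) * C2 * B ^ (1 / p) * W ^ (1 / q) * δt ^ (1 / p) := by
  have hX₁ : X ^ (1 / p) ≤ X + 1 :=
    (Real.rpow_le_rpow hX (le_add_of_nonneg_right zero_le_one) hpq.one_div_nonneg).trans
      (Real.rpow_le_self_of_one_le (by linarith) ((div_le_one hpq.pos).2 hpq.lt.le))
  have hMexp : M ^ ((2 * p - 1) / p) = M * M ^ (1 / q) := by
    have := hpq.symm.pos
    rw [← Real.rpow_one_add' hM.le (by positivity), one_div q, ← hpq.one_sub_inv]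
    congr 1
    field_simp [hpq.ne_zero]
    ring
  rw [Real.mul_rpow hX (by positivity), Real.mul_rpow hδt hB, Real.mul_rpow hM.le hW, hMexp]
  calc _ = X ^ (1 / p) * (C2 * CM * (M * M ^ (1 / q)) * B ^ (1 / p) * W ^ (1 / q) *
        δt ^ (1 / p)) := by ring
    _ ≤ (X + 1) * (C2 * CM * (M * M ^ (1 / q)) * B ^ (1 / p) * W ^ (1 / q) *
        δt ^ (1 / p)) := by gcongr
    _ = _ := by ring

section Mesh

variable {Cell Face : Type*} [Fintype Cell]

theorem sum_card_mul_weight_le (d NE N : ℕ) {δt : ℝ} (hδt : 0 ≤ δt) (measK : Cell → ℝ)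
    (hmeas : ∀ K, 0 ≤ measK K) (E : Cell → Finset Face) (hE : ∀ K, #(E K) ≤ NE)
    (ρ : Cell → ℕ → ℝ) :
    ∑ a ∈ range N ×ˢ univ, (#(univ ×ˢ E a.2 ×ˢ E a.2 : Finset (Fin d × Face × Face)) : ℝ) *
        (δt * measK a.2 * |ρ a.2 (a.1 + 1) - ρ a.2 a.1|)
      ≤ d * NE ^ 2 * (δt * ∑ n ∈ range N, ∑ K, measK K * |ρ K (n + 1) - ρ K n|) := by
  simp only [sum_product, mul_sum, card_product, card_univ, Fintype.card_fin]
  refine sum_le_sum fun n _ => sum_le_sum fun K _ => ?_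
  have hw : 0 ≤ δt * (measK K * |ρ K (n + 1) - ρ K n|) := by
    have := hmeas K; positivity
  calc ((d * (#(E K) * #(E K)) : ℕ) : ℝ) * (δt * measK K * |ρ K (n + 1) - ρ K n|)
      = d * (#(E K) : ℝ) ^ 2 * (δt * (measK K * |ρ K (n + 1) - ρ K n|)) := by push_cast; ring
    _ ≤ d * NE ^ 2 * (δt * (measK K * |ρ K (n + 1) - ρ K n|)) := by
        gcongr
        exact_mod_cast hE K

theorem sum_weight_mul_sum_rpow_le (d N : ℕ) {δt M q : ℝ} (hδt : 0 ≤ δt) (hM : 0 ≤ M)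
    (measK hK : Cell → ℝ) (hmeas : ∀ K, 0 ≤ measK K) (hhK : ∀ K, 0 ≤ hK K)
    (E : Cell → Finset Face) (uvec : Face → ℕ → Fin d → ℝ) (ρ : Cell → ℕ → ℝ)
    (hρ : ∀ K, ∀ n < N, |ρ K (n + 1) - ρ K n| ≤ M) :
    ∑ a ∈ range N ×ˢ univ, δt * measK a.2 * |ρ a.2 (a.1 + 1) - ρ a.2 a.1| *
        ∑ x ∈ univ ×ˢ E a.2 ×ˢ E a.2, (|uvec x.2.1 a.1 x.1 - uvec x.2.2 a.1 x.1| / hK a.2) ^ q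
      ≤ M * ∑ i : Fin d, ∑ n ∈ range (N + 1), δt * ∑ K, ∑ f ∈ E K, ∑ f' ∈ E K,
          measK K * (|uvec f n i - uvec f' n i| / hK K) ^ q := by
  set g : ℕ → Cell → Fin d → Face → Face → ℝ :=
    fun n K i f f' => measK K * (|uvec f n i - uvec f' n i| / hK K) ^ q
  have hg : ∀ n K i f f', 0 ≤ g n K i f f' := fun n K i f f' =>
    mul_nonneg (hmeas K) (Real.rpow_nonneg (div_nonneg (abs_nonneg _) (hhK K)) q)
  calc _ ≤ ∑ a ∈ range N ×ˢ univ, M * (δt * measK a.2 * ∑ x ∈ univ ×ˢ E a.2 ×ˢ E a.2,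
        (|uvec x.2.1 a.1 x.1 - uvec x.2.2 a.1 x.1| / hK a.2) ^ q) := by
        refine sum_le_sum fun a ha => ?_
        rw [mul_right_comm, mul_comm M]
        have hS : 0 ≤ ∑ x ∈ univ ×ˢ E a.2 ×ˢ E a.2,
            (|uvec x.2.1 a.1 x.1 - uvec x.2.2 a.1 x.1| / hK a.2) ^ q :=
          sum_nonneg fun x _ => Real.rpow_nonneg (div_nonneg (abs_nonneg _) (hhK a.2)) q
        have := hmeas a.2
        gcongr
        exact hρ a.2 a.1 (mem_range.1 (mem_product.1 ha).1)
    _ = M * ∑ i : Fin d, ∑ n ∈ range N, δt * ∑ K, ∑ f ∈ E K, ∑ f' ∈ E K, g n K i f f' := by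
        simp only [sum_product, mul_sum, g]
        conv_rhs => rw [sum_comm]
        refine sum_congr rfl fun n _ => ?_
        rw [sum_comm]
        exact sum_congr rfl fun K _ => sum_congr rfl fun i _ => sum_congr rfl fun f _ =>
          sum_congr rfl fun f' _ => by ring
    _ ≤ _ := by
        gcongr
        · exact fun n _ _ => mul_nonneg hδt (sum_nonneg fun K _ =>
            sum_nonneg fun f _ => sum_nonneg fun f' _ => hg n K i f f')
        · exact Nat.le_succ N

theorem sum_abs_remainder_le (d NE N : ℕ) {M C2 CM δt p q : ℝ} (hM : 0 < M) (hC2 : 0 ≤ C2)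
    (hCM0 : 0 ≤ CM) (hδt : 0 ≤ δt) (hpq : p.HolderConjugate q) (g : ℝ → ℝ)
    (hg : ∀ x ∈ Set.Icc (1 / M) M, |g x| ≤ C2) (measK hK : Cell → ℝ) (hmeas : ∀ K, 0 < measK K)
    (hhK : ∀ K, 0 < hK K) (E : Cell → Finset Face) (hE : ∀ K, #(E K) ≤ NE) (area : Face → ℝ)
    (harea : ∀ f, 0 ≤ area f) (nrm : Cell → Face → Fin d → ℝ)
    (hnrm : ∀ K f, f ∈ E K → ∑ i, nrm K f i ^ 2 = 1)
    (hclosed : ∀ K i, ∑ f ∈ E K, area f * nrm K f i = 0)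
    (hCM : ∀ K, ∀ f ∈ E K, ∀ f' ∈ E K, (area f + area f') * hK K / measK K ≤ CM)
    (uvec : Face → ℕ → Fin d → ℝ) (ρ ρt : Cell → ℕ → ℝ)
    (hρ : ∀ K n, n ≤ N → ρ K n ∈ Set.Icc (1 / M) M)
    (hρt : ∀ K n, n < N → ρt K n ∈ Set.uIcc (ρ K n) (ρ K (n + 1))) :
    ∑ n ∈ range N, δt * ∑ K, |g (ρt K n) * (ρ K (n + 1) - ρ K n) * ρ K n *
        ∑ f ∈ E K, area f * ∑ i, uvec f n i * nrm K f i|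
      ≤ C2 * M * CM * ((d * NE ^ 2 * (δt * ∑ n ∈ range N, ∑ K, measK K * |ρ K (n + 1) - ρ K n|))
          ^ (1 / p) * (M * ∑ i : Fin d, ∑ n ∈ range (N + 1), δt * ∑ K, ∑ f ∈ E K, ∑ f' ∈ E K,
            measK K * (|uvec f n i - uvec f' n i| / hK K) ^ q) ^ (1 / q)) := by
  have hM' : 0 < 1 / M := by positivity
  have hρM : ∀ K, ∀ n < N, |ρ K (n + 1) - ρ K n| ≤ M := fun K n hn => by
    have h₀ := hρ K n hn.le
    have h₁ := hρ K (n + 1) hn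
    linarith [abs_sub_le_of_le_of_le h₁.1 h₁.2 h₀.1 h₀.2]
  calc _ ≤ ∑ n ∈ range N, δt * ∑ K, C2 * M * CM * (measK K *
        |ρ K (n + 1) - ρ K n| * ∑ x ∈ univ ×ˢ E K ×ˢ E K,
          |uvec x.2.1 n x.1 - uvec x.2.2 n x.1| / hK K) := by
        gcongr with n hn K
        have hn := mem_range.1 hn
        have h₀ := hρ K n hn.le
        refine abs_remainder_cell_le (E K) area (nrm K) (fun f => uvec f n) (hmeas K) (hhK K)
          (fun f _ => harea f) (hnrm K) (hclosed K) (hCM K) (hg _ ?_)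
          ((abs_of_pos (hM'.trans_le h₀.1)).trans_le h₀.2)
        exact Set.uIcc_subset_Icc h₀ (hρ K (n + 1) hn) (hρt K n hn)
    _ = C2 * M * CM * ∑ a ∈ range N ×ˢ univ, δt * measK a.2 * |ρ a.2 (a.1 + 1) - ρ a.2 a.1| *
          ∑ x ∈ univ ×ˢ E a.2 ×ˢ E a.2, |uvec x.2.1 a.1 x.1 - uvec x.2.2 a.1 x.1| / hK a.2 := by
        simp only [sum_product (range N), mul_sum]
        exact sum_congr rfl fun n _ => sum_congr rfl fun K _ => sum_congr rfl fun x _ => by ring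
    _ ≤ _ := by
        refine mul_le_mul_of_nonneg_left (sum_mul_sum_le_rpow_mul_rpow _ _ hpq _ _
          (fun a => by have := hmeas a.2; positivity) (fun a x => by have := hhK a.2; positivity)
          (sum_card_mul_weight_le d NE N hδt measK (fun K => (hmeas K).le) E hE ρ)
          (sum_weight_mul_sum_rpow_le d N hδt hM.le measK hK (fun K => (hmeas K).le)
            (fun K => (hhK K).le) E uvec ρ hρM)) (by positivity)

end Mesh

theorem explicit_mass_R01_bound_general (d NE : ℕ) :
    ∃ Cst : ℝ, 0 < Cst ∧
      ∀ (M : ℝ), 1 < M →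
      ∀ (φ : ℝ → ℝ), ContDiffOn ℝ 2 φ (Set.Ioi 0) →
      ∀ (C2 : ℝ), (∀ x ∈ Set.Icc (1 / M) M, |deriv (deriv φ) x| ≤ C2) →
      ∀ (Cell Face : Type) (_ : Fintype Cell) (_ : Fintype Face),
      ∀ (measK hK : Cell → ℝ), (∀ Kc, 0 < measK Kc) → (∀ Kc, 0 < hK Kc) →
      ∀ (E : Cell → Finset Face), (∀ Kc, (E Kc).card ≤ NE) →
      ∀ (area : Face → ℝ), (∀ f, 0 < area f) →
      ∀ (nrm : Cell → Face → Fin d → ℝ),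
        (∀ Kc f, f ∈ E Kc → ∑ i, (nrm Kc f i) ^ 2 = 1) →
        (∀ Kc i, ∑ f ∈ E Kc, area f * nrm Kc f i = 0) →
      ∀ (N : ℕ) (δt : ℝ), 0 < δt →
      ∀ (uvec : Face → ℕ → Fin d → ℝ),
      ∀ (ρ : Cell → ℕ → ℝ), (∀ Kc n, n ≤ N → ρ Kc n ∈ Set.Icc (1 / M) M) →
      ∀ (ρt : Cell → ℕ → ℝ), (∀ Kc n, n < N → ρt Kc n ∈ Set.uIcc (ρ Kc n) (ρ Kc (n + 1))) →
      ∀ (CM : ℝ),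
        (∀ Kc, ∀ f ∈ E Kc, ∀ f' ∈ E Kc, (area f + area f') * hK Kc / measK Kc ≤ CM) →
      ∀ (p q : ℝ), 1 < p → 1 < q → 1 / p + 1 / q = 1 →
        ∑ n ∈ Finset.range N, δt * ∑ Kc : Cell,
          |deriv (deriv φ) (ρt Kc n) * (ρ Kc (n + 1) - ρ Kc n) * ρ Kc n *
            ∑ f ∈ E Kc, area f * (∑ i, uvec f n i * nrm Kc f i)|
        ≤ Cst * CM * M ^ ((2 * p - 1) / p) * C2 *
            (∑ n ∈ Finset.range N, ∑ Kc : Cell, measK Kc * |ρ Kc (n + 1) - ρ Kc n|) ^ (1 / p) *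
            ((∑ i : Fin d, ∑ n ∈ Finset.range (N + 1), δt * ∑ Kc : Cell,
                ∑ f ∈ E Kc, ∑ f' ∈ E Kc,
                  measK Kc * (|uvec f n i - uvec f' n i| / hK Kc) ^ q) ^ (1 / q)) *
            δt ^ (1 / p) := by
  refine ⟨d * NE ^ 2 + 1, by positivity, ?_⟩
  intro M hM φ _ C2 hC2 Cell Face _ _ measK hK hmeas hhK E hE area harea nrm hnrm hclosed N δt
    hδt uvec ρ hρ ρt hρt CM hCM p q hp hq hpq
  obtain hCM0 | hCM0 := lt_or_ge CM 0
  · -- a face `f` of `K` would give `0 < 2 |f| h_K / |K| ≤ C_M`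
    have hE₀ : ∀ K, E K = ∅ := fun K => eq_empty_of_forall_notMem fun f hf => by
      have := harea f; have := hhK K; have := hmeas K
      exact (hCM K f hf f hf).not_gt (hCM0.trans (by positivity))
    simp [hE₀, Real.zero_rpow (inv_ne_zero (by positivity : q ≠ 0))]
  have hpq' : p.HolderConjugate q :=
    Real.holderConjugate_iff.2 ⟨hp, by simpa only [one_div] using hpq⟩
  have hC2₀ : 0 ≤ C2 := (abs_nonneg _).trans (hC2 1 ⟨by rw [div_le_one] <;> linarith, hM.le⟩)
  have hBV : 0 ≤ ∑ n ∈ range N, ∑ K, measK K * |ρ K (n + 1) - ρ K n| :=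
    sum_nonneg fun n _ => sum_nonneg fun K _ => by have := hmeas K; positivity
  have hW : 0 ≤ ∑ i : Fin d, ∑ n ∈ range (N + 1), δt * ∑ K, ∑ f ∈ E K, ∑ f' ∈ E K,
      measK K * (|uvec f n i - uvec f' n i| / hK K) ^ q :=
    sum_nonneg fun i _ => sum_nonneg fun n _ => mul_nonneg hδt.le <| sum_nonneg fun K _ =>
      sum_nonneg fun f _ => sum_nonneg fun f' _ => by have := hmeas K; have := hhK K; positivity
  exact (sum_abs_remainder_le d NE N (by linarith) hC2₀ hCM0 hδt.le hpq' _ hC2 measK hK hmeas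
    hhK E hE area (fun f => (harea f).le) nrm hnrm hclosed hCM uvec ρ ρt hρ hρt).trans
    (mul_rpow_mul_rpow_le_add_one hpq' (by linarith) (by positivity) hBV hW hδt.le hC2₀ hCM0)

/-- L¹ bound on the remainder `R₀₁` of the explicit renormalized mass balance
(Lemma 3.5): there is a constant `Cst` depending only on the space dimension `d` and
on the maximal number of faces `NE` of the cells, such that
`‖R₀₁‖_{L¹} ≤ Cst C_M M^{(2p−1)/p} |φ''|_∞ |ρ|_{T,BV}^{1/p} ‖u‖_{L^q(W^{1,q})} δt^{1/p}`. -/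
theorem explicit_mass_R01_bound (d NE : ℕ) (hd : 1 ≤ d) :
    ∃ Cst : ℝ, 0 < Cst ∧
      ∀ (M : ℝ), 1 < M →
      ∀ (φ : ℝ → ℝ), ContDiffOn ℝ 2 φ (Set.Ioi 0) →
      ∀ (C2 : ℝ), (∀ x ∈ Set.Icc (1 / M) M, |deriv (deriv φ) x| ≤ C2) →
      ∀ (Cell Face : Type) (_ : Fintype Cell) (_ : Fintype Face),
      ∀ (measK hK : Cell → ℝ), (∀ Kc, 0 < measK Kc) → (∀ Kc, 0 < hK Kc) →
      ∀ (E : Cell → Finset Face), (∀ Kc, (E Kc).card ≤ NE) →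
      ∀ (area : Face → ℝ), (∀ f, 0 < area f) →
      ∀ (nrm : Cell → Face → Fin d → ℝ),
        (∀ Kc f, f ∈ E Kc → ∑ i, (nrm Kc f i) ^ 2 = 1) →
        (∀ Kc i, ∑ f ∈ E Kc, area f * nrm Kc f i = 0) →
      ∀ (N : ℕ) (δt : ℝ), 0 < δt →
      ∀ (uvec : Face → ℕ → Fin d → ℝ),
      ∀ (ρ : Cell → ℕ → ℝ), (∀ Kc n, n ≤ N → ρ Kc n ∈ Set.Icc (1 / M) M) →
      ∀ (ρt : Cell → ℕ → ℝ), (∀ Kc n, n < N → ρt Kc n ∈ Set.uIcc (ρ Kc n) (ρ Kc (n + 1))) →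
      ∀ (CM : ℝ),
        (∀ Kc, ∀ f ∈ E Kc, ∀ f' ∈ E Kc, (area f + area f') * hK Kc / measK Kc ≤ CM) →
      ∀ (p q : ℝ), 1 < p → 1 < q → 1 / p + 1 / q = 1 →
        ∑ n ∈ Finset.range N, δt * ∑ Kc : Cell,
          |deriv (deriv φ) (ρt Kc n) * (ρ Kc (n + 1) - ρ Kc n) * ρ Kc n *
            ∑ f ∈ E Kc, area f * (∑ i, uvec f n i * nrm Kc f i)|
        ≤ Cst * CM * M ^ ((2 * p - 1) / p) * C2 *
            (∑ n ∈ Finset.range N, ∑ Kc : Cell, measK Kc * |ρ Kc (n + 1) - ρ Kc n|) ^ (1 / p) *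
            ((∑ i : Fin d, ∑ n ∈ Finset.range (N + 1), δt * ∑ Kc : Cell,
                ∑ f ∈ E Kc, ∑ f' ∈ E Kc,
                  measK Kc * (|uvec f n i - uvec f' n i| / hK Kc) ^ q) ^ (1 / q)) *
            δt ^ (1 / p) :=
  explicit_mass_R01_bound_general d NE
end

section
/- Let d≥1 and let S be a finite nonempty set. For σ∈S let a_σ>0, let n_σ ∈ ℝ^d be a vector with Euclidean norm at most 1, and let u_σ ∈ ℝ^d. Assume Σ_{σ∈S} a_σ·n_σ = 0. Then |Σ_{σ∈S} a_σ·(u_σ·n_σ)| ≤ 2·Σ_{i=1}^{d} Σ_{(σ,σ')∈S²} (a_σ + a_{σ'})·|u_{σ,i} − u_{σ',i}|. -/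
/-- Bound of the discrete divergence of the velocity through the faces of a cell by
the jumps of the face velocities: if the outward normals `n_σ` (of Euclidean norm at
most 1) weighted by the face areas sum to zero, then
`|Σ_σ a_σ (u_σ·n_σ)| ≤ 2 Σ_i Σ_{(σ,σ')} (a_σ + a_σ') |u_{σ,i} − u_{σ',i}|`. -/
theorem discrete_divergence_bound
    (d : ℕ) (hd : 1 ≤ d) {ι : Type*} (S : Finset ι) (hS : S.Nonempty)
    (a : ι → ℝ) (ha : ∀ σ ∈ S, 0 < a σ)
    (nrm : ι → Fin d → ℝ) (hn : ∀ σ ∈ S, ∑ i, (nrm σ i) ^ 2 ≤ 1)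
    (u : ι → Fin d → ℝ)
    (hclosed : ∀ i, ∑ σ ∈ S, a σ * nrm σ i = 0) :
    |∑ σ ∈ S, a σ * ∑ i, u σ i * nrm σ i|
      ≤ 2 * ∑ i : Fin d, ∑ σ ∈ S, ∑ σ' ∈ S, (a σ + a σ') * |u σ i - u σ' i| := by
  obtain ⟨σ₀, hσ₀⟩ := hS
  have habs_n : ∀ σ ∈ S, ∀ i, |nrm σ i| ≤ 1 := by
    intro σ hσ i
    have h1 : (nrm σ i) ^ 2 ≤ 1 := by
      refine le_trans ?_ (hn σ hσ)
      exact Finset.single_le_sum (f := fun j => (nrm σ j) ^ 2) (fun j _ => sq_nonneg _)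
        (Finset.mem_univ i)
    simpa using h1
  have key : ∑ σ ∈ S, a σ * ∑ i, u σ i * nrm σ i
      = ∑ σ ∈ S, a σ * ∑ i, (u σ i - u σ₀ i) * nrm σ i := by
    have h0 : ∑ i, u σ₀ i * ∑ σ ∈ S, a σ * nrm σ i = 0 := by
      simp [hclosed]
    calc ∑ σ ∈ S, a σ * ∑ i, u σ i * nrm σ i
        = ∑ σ ∈ S, a σ * ∑ i, (u σ i - u σ₀ i) * nrm σ i
          + ∑ i, u σ₀ i * ∑ σ ∈ S, a σ * nrm σ i := by
          simp_rw [Finset.mul_sum]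
          rw [Finset.sum_comm (s := S), Finset.sum_comm (s := S)
            (f := fun σ i => a σ * ((u σ i - u σ₀ i) * nrm σ i)), ← Finset.sum_add_distrib]
          refine Finset.sum_congr rfl fun i _ => ?_
          rw [← Finset.sum_add_distrib]
          refine Finset.sum_congr rfl fun σ _ => ?_
          ring
      _ = ∑ σ ∈ S, a σ * ∑ i, (u σ i - u σ₀ i) * nrm σ i := by rw [h0, add_zero]
  rw [key]
  calc |∑ σ ∈ S, a σ * ∑ i, (u σ i - u σ₀ i) * nrm σ i|
      ≤ ∑ σ ∈ S, |a σ * ∑ i, (u σ i - u σ₀ i) * nrm σ i| := Finset.abs_sum_le_sum_abs _ _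
    _ ≤ ∑ σ ∈ S, a σ * ∑ i, |u σ i - u σ₀ i| := by
        apply Finset.sum_le_sum
        intro σ hσ
        rw [abs_mul, abs_of_pos (ha σ hσ)]
        apply mul_le_mul_of_nonneg_left _ (ha σ hσ).le
        calc |∑ i, (u σ i - u σ₀ i) * nrm σ i|
            ≤ ∑ i, |(u σ i - u σ₀ i) * nrm σ i| := Finset.abs_sum_le_sum_abs _ _
          _ ≤ ∑ i, |u σ i - u σ₀ i| := by
              apply Finset.sum_le_sum
              intro i _
              rw [abs_mul]
              exact mul_le_of_le_one_right (abs_nonneg _) (habs_n σ hσ i)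
    _ = ∑ i : Fin d, ∑ σ ∈ S, a σ * |u σ i - u σ₀ i| := by
        simp_rw [Finset.mul_sum]; rw [Finset.sum_comm]
    _ ≤ ∑ i : Fin d, ∑ σ ∈ S, ∑ σ' ∈ S, (a σ + a σ') * |u σ i - u σ' i| := by
        apply Finset.sum_le_sum; intro i _
        apply Finset.sum_le_sum; intro σ hσ
        calc a σ * |u σ i - u σ₀ i|
            ≤ (a σ + a σ₀) * |u σ i - u σ₀ i| := by
              apply mul_le_mul_of_nonneg_right _ (abs_nonneg _)
              linarith [ha σ₀ hσ₀]
          _ ≤ ∑ σ' ∈ S, (a σ + a σ') * |u σ i - u σ' i| := by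
              apply Finset.single_le_sum (f := fun σ' => (a σ + a σ') * |u σ i - u σ' i|)
                _ hσ₀
              intro σ' hσ'
              exact mul_nonneg (by linarith [ha σ hσ, ha σ' hσ']) (abs_nonneg _)
    _ ≤ 2 * ∑ i : Fin d, ∑ σ ∈ S, ∑ σ' ∈ S, (a σ + a σ') * |u σ i - u σ' i| := by
        have hnn : 0 ≤ ∑ i : Fin d, ∑ σ ∈ S, ∑ σ' ∈ S, (a σ + a σ') * |u σ i - u σ' i| := by
          apply Finset.sum_nonneg; intro i _
          apply Finset.sum_nonneg; intro σ hσ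
          apply Finset.sum_nonneg; intro σ' hσ'
          exact mul_nonneg (by linarith [ha σ hσ, ha σ' hσ']) (abs_nonneg _)
        linarith
end

section
/- Let M>1 and let φ be a twice continuously differentiable function on (0,∞) with φ'' > 0; let m = min of φ'' and M_φ = max of φ'' on [1/M, M]. Let S be a finite set; for σ∈S let a_σ≥0, u_σ∈ℝ, ρ_σ>0, and a neighbour energy e_{L,σ} ∈ [1/M, M]; let |K|>0, δt>0, ρⁿ>0, ρⁿ⁺¹>0, and eⁿ, eⁿ⁺¹ ∈ [1/M, M]. Define the upwind face energies e_σ = eⁿ if u_σ ≥ 0 and e_σ = e_{L,σ} if u_σ < 0, and the mass fluxes F_σ = a_σ·ρ_σ·u_σ. Assume the discrete mass balance (|K|/δt)(ρⁿ⁺¹−ρⁿ) + Σ_{σ∈S} F_σ = 0 and the CFL condition δt·M_φ²·Σ_{σ∈S} (F_σ)⁻ ≤ m²·|K|·ρⁿ⁺¹, where (F_σ)⁻ = max(−F_σ, 0). Then φ'(eⁿ⁺¹)·[(|K|/δt)(ρⁿ⁺¹eⁿ⁺¹ − ρⁿeⁿ) + Σ_{σ∈S} F_σ·e_σ] ≥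 (|K|/δt)(ρⁿ⁺¹φ(eⁿ⁺¹) − ρⁿφ(eⁿ)) + Σ_{σ∈S} F_σ·φ(e_σ). -/
/-!
Write `D(x) = φ x - φ eⁿ⁺¹ - φ'(eⁿ⁺¹) (x - eⁿ⁺¹)` for the Bregman divergence of `φ` at `eⁿ⁺¹`,
which is nonnegative because `φ` is convex. Eliminating `ρⁿ` with the mass balance turns the
difference of the two sides into `(|K|/δt) ρⁿ⁺¹ D(eⁿ) - ∑ F_σ (D(e_σ) - D(eⁿ))`. On an outgoing
face `e_σ = eⁿ` and the term vanishes; on an incoming face `F_σ ≤ 0`, so the term is at most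
`(F_σ)⁻ D(eⁿ)`. Since `m ≤ M_φ`, the CFL condition bounds `∑ (F_σ)⁻` by `(|K|/δt) ρⁿ⁺¹`.
-/

open Finset Set

lemma ConvexOn.add_deriv_mul_sub_le {s : Set ℝ} {f : ℝ → ℝ} (hf : ConvexOn ℝ s f) {x y : ℝ}
    (hx : x ∈ s) (hy : y ∈ s) (hfx : DifferentiableAt ℝ f x) :
    f x + deriv f x * (y - x) ≤ f y := by
  rcases lt_trichotomy x y with hxy | rfl | hxy
  · have h := hf.deriv_le_slope hx hy hxy hfx
    rw [slope_def_field, le_div_iff₀ (sub_pos.2 hxy)] at h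
    linarith
  · simp
  · have h := hf.slope_le_deriv hy hx hxy hfx
    rw [slope_def_field, div_le_iff₀ (sub_pos.2 hxy)] at h
    linarith

noncomputable def bregmanDiv (φ : ℝ → ℝ) (y x : ℝ) : ℝ := φ x - φ y - deriv φ y * (x - y)

lemma bregmanDiv_nonneg {s : Set ℝ} {φ : ℝ → ℝ} (hφ : ConvexOn ℝ s φ) {x y : ℝ}
    (hy : y ∈ s) (hx : x ∈ s) (hφy : DifferentiableAt ℝ φ y) : 0 ≤ bregmanDiv φ y x := by
  have := hφ.add_deriv_mul_sub_le hy hx hφy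
  unfold bregmanDiv
  linarith

lemma renormalization_defect_eq (φ : ℝ → ℝ) {ι : Type*} (S : Finset ι) (F e : ι → ℝ)
    {A ρ ρ' x x' : ℝ} (hmass : A * (ρ' - ρ) + ∑ σ ∈ S, F σ = 0) :
    deriv φ x' * (A * (ρ' * x' - ρ * x) + ∑ σ ∈ S, F σ * e σ)
        - (A * (ρ' * φ x' - ρ * φ x) + ∑ σ ∈ S, F σ * φ (e σ))
      = A * ρ' * bregmanDiv φ x' x
        - ∑ σ ∈ S, F σ * (bregmanDiv φ x' (e σ) - bregmanDiv φ x' x) := by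
  have hsum : ∑ σ ∈ S, F σ * (bregmanDiv φ x' (e σ) - bregmanDiv φ x' x)
      = ∑ σ ∈ S, F σ * φ (e σ) - deriv φ x' * ∑ σ ∈ S, F σ * e σ
        + (deriv φ x' * x - φ x) * ∑ σ ∈ S, F σ := by
    simp only [bregmanDiv, mul_sum, ← sum_sub_distrib, ← sum_add_distrib]
    exact sum_congr rfl fun σ _ => by ring
  rw [hsum, bregmanDiv]
  linear_combination (deriv φ x' * x - φ x) * hmass

lemma mul_sub_le_max_neg_mul {F b b₀ : ℝ} (hb : 0 ≤ b) (hb₀ : 0 ≤ b₀) (h : b = b₀ ∨ F ≤ 0) :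
    F * (b - b₀) ≤ max (-F) 0 * b₀ := by
  rcases h with rfl | hF
  · simpa using mul_nonneg (le_max_right (-F) 0) hb
  · rw [max_eq_left (neg_nonneg.2 hF)]
    nlinarith

lemma le_div_mul_of_cfl {δt K ρ m Mφ N : ℝ} (hδt : 0 < δt) (hm : 0 < m) (hmM : m ≤ Mφ)
    (hKρ : 0 ≤ K * ρ) (hcfl : δt * Mφ ^ 2 * N ≤ m ^ 2 * K * ρ) : N ≤ K / δt * ρ := by
  have hsq : m ^ 2 ≤ Mφ ^ 2 := pow_le_pow_left₀ hm.le hmM 2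
  have hMpos : 0 < Mφ ^ 2 := pow_pos (hm.trans_le hmM) 2
  rw [div_mul_eq_mul_div, le_div_iff₀ hδt]
  refine le_of_mul_le_mul_left ?_ hMpos
  nlinarith

theorem explicit_upwind_energy_renormalization_general
    (M : ℝ) (hM : 1 < M)
    (φ : ℝ → ℝ) (hφ : ContDiffOn ℝ 2 φ (Set.Ioi 0))
    (hφ'' : ∀ x ∈ Set.Ioi (0 : ℝ), 0 < deriv (deriv φ) x)
    (m Mφ : ℝ) (hm0 : 0 < m)
    (hm : ∀ x ∈ Set.Icc (1 / M) M, m ≤ deriv (deriv φ) x)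
    (hMφ : ∀ x ∈ Set.Icc (1 / M) M, deriv (deriv φ) x ≤ Mφ)
    {ι : Type*} (S : Finset ι) (a u ρσ eL : ι → ℝ)
    (ha : ∀ σ ∈ S, 0 ≤ a σ) (hρσ : ∀ σ ∈ S, 0 < ρσ σ)
    (heL : ∀ σ ∈ S, eL σ ∈ Set.Icc (1 / M) M)
    (K δt ρn ρn1 en en1 : ℝ) (hK : 0 < K) (hδt : 0 < δt)
    (hρn1 : 0 < ρn1)
    (hen : en ∈ Set.Icc (1 / M) M) (hen1 : en1 ∈ Set.Icc (1 / M) M)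
    (eσ F : ι → ℝ)
    (heσ : ∀ σ ∈ S, eσ σ = if 0 ≤ u σ then en else eL σ)
    (hF : ∀ σ ∈ S, F σ = a σ * ρσ σ * u σ)
    (hmass : K / δt * (ρn1 - ρn) + ∑ σ ∈ S, F σ = 0)
    (hcfl : δt * Mφ ^ 2 * ∑ σ ∈ S, max (-F σ) 0 ≤ m ^ 2 * K * ρn1) :
    K / δt * (ρn1 * φ en1 - ρn * φ en) + ∑ σ ∈ S, F σ * φ (eσ σ)
      ≤ deriv φ en1 * (K / δt * (ρn1 * en1 - ρn * en) + ∑ σ ∈ S, F σ * eσ σ) := by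
  have hpos : Icc (1 / M) M ⊆ Ioi 0 := fun x hx => (one_div_pos.2 (by linarith)).trans_le hx.1
  have hconv : ConvexOn ℝ (Ioi 0) φ :=
    (strictConvexOn_of_deriv2_pos' (convex_Ioi 0) hφ.continuousOn
      fun x hx => by simpa using hφ'' x hx).convexOn
  have hdiff : DifferentiableAt ℝ φ en1 :=
    (hφ.differentiableOn two_ne_zero).differentiableAt (isOpen_Ioi.mem_nhds (hpos hen1))
  have hB : ∀ x ∈ Icc (1 / M) M, 0 ≤ bregmanDiv φ en1 x := fun x hx =>
    bregmanDiv_nonneg hconv (hpos hen1) (hpos hx) hdiff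
  have hupwind : ∀ σ ∈ S, (eσ σ = en ∨ F σ ≤ 0) ∧ eσ σ ∈ Icc (1 / M) M := by
    intro σ hσ
    rw [heσ σ hσ, hF σ hσ]
    split_ifs with hu
    · exact ⟨Or.inl rfl, hen⟩
    · exact ⟨Or.inr (mul_nonpos_of_nonneg_of_nonpos (mul_nonneg (ha σ hσ) (hρσ σ hσ).le)
        (not_le.1 hu).le), heL σ hσ⟩
  have hinflow : ∑ σ ∈ S, max (-F σ) 0 ≤ K / δt * ρn1 :=
    le_div_mul_of_cfl hδt hm0 ((hm en hen).trans (hMφ en hen)) (mul_pos hK hρn1).le hcfl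
  rw [← sub_nonneg, renormalization_defect_eq φ S F eσ hmass, sub_nonneg]
  calc ∑ σ ∈ S, F σ * (bregmanDiv φ en1 (eσ σ) - bregmanDiv φ en1 en)
      ≤ ∑ σ ∈ S, max (-F σ) 0 * bregmanDiv φ en1 en := sum_le_sum fun σ hσ =>
        mul_sub_le_max_neg_mul (hB _ (hupwind σ hσ).2) (hB en hen)
          ((hupwind σ hσ).1.imp_left (congrArg _))
    _ = (∑ σ ∈ S, max (-F σ) 0) * bregmanDiv φ en1 en := (sum_mul ..).symm
    _ ≤ K / δt * ρn1 * bregmanDiv φ en1 en := mul_le_mul_of_nonneg_right hinflow (hB en hen)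

/-- Renormalization inequality for the explicit upwind discretization of the internal
energy convection operator under a CFL condition: multiplying the convection operator
by `φ'(eⁿ⁺¹)` dominates the renormalized (conservative) convection operator. -/
theorem explicit_upwind_energy_renormalization
    (M : ℝ) (hM : 1 < M)
    (φ : ℝ → ℝ) (hφ : ContDiffOn ℝ 2 φ (Set.Ioi 0))
    (hφ'' : ∀ x ∈ Set.Ioi (0 : ℝ), 0 < deriv (deriv φ) x)
    (m Mφ : ℝ) (hm0 : 0 < m)
    (hm : ∀ x ∈ Set.Icc (1 / M) M, m ≤ deriv (deriv φ) x)
    (hMφ : ∀ x ∈ Set.Icc (1 / M) M, deriv (deriv φ) x ≤ Mφ)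
    {ι : Type*} (S : Finset ι) (a u ρσ eL : ι → ℝ)
    (ha : ∀ σ ∈ S, 0 ≤ a σ) (hρσ : ∀ σ ∈ S, 0 < ρσ σ)
    (heL : ∀ σ ∈ S, eL σ ∈ Set.Icc (1 / M) M)
    (K δt ρn ρn1 en en1 : ℝ) (hK : 0 < K) (hδt : 0 < δt)
    (hρn : 0 < ρn) (hρn1 : 0 < ρn1)
    (hen : en ∈ Set.Icc (1 / M) M) (hen1 : en1 ∈ Set.Icc (1 / M) M)
    (eσ F : ι → ℝ)
    (heσ : ∀ σ ∈ S, eσ σ = if 0 ≤ u σ then en else eL σ)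
    (hF : ∀ σ ∈ S, F σ = a σ * ρσ σ * u σ)
    (hmass : K / δt * (ρn1 - ρn) + ∑ σ ∈ S, F σ = 0)
    (hcfl : δt * Mφ ^ 2 * ∑ σ ∈ S, max (-F σ) 0 ≤ m ^ 2 * K * ρn1) :
    K / δt * (ρn1 * φ en1 - ρn * φ en) + ∑ σ ∈ S, F σ * φ (eσ σ)
      ≤ deriv φ en1 * (K / δt * (ρn1 * en1 - ρn * en) + ∑ σ ∈ S, F σ * eσ σ) :=
  explicit_upwind_energy_renormalization_general M hM φ hφ hφ'' m Mφ hm0 hm hMφ S a u ρσ eL ha hρσ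
    heL K δt ρn ρn1 en en1 hK hδt hρn1 hen hen1 eσ F heσ hF hmass hcfl
end
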